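/- arXiv:0808.2753 — 13 statements merged into one kernel-verified Lean document; each statement's English description precedes it below -/
import Mathlib

section
/- Let G be a cyclic group of prime order p, let k < p be a positive integer, let a_1,...,a_k be k distinct elements of G, and let b_1,...,b_k be (not necessarily distinct) elements of G. Then there is a permutation π ∈ S_k such that a_1·b_{π(1)}, ..., a_k·b_{π(k)} are pairwise distinct. -/
/-!
Transport the problem to `ZMod p` and work additively in a field `F` with `k! ≠ 0`. For distinct
nodes `α j` with Lagrange weights `w j = ∏_{l ≠ j} (α j - α l)⁻¹`, the weighted grid sum
`∑_y (∏ i, w (y i)) f (α ∘ y)` over `y : Fin k → Fin k` extracts the coefficient of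
`∏ i, x i ^ (k - 1)` from `f` whenever every monomial of `f` has total degree `≤ k (k - 1)`
(Lagrange interpolation in each variable: the coefficient form of the Combinatorial
Nullstellensatz). For `f x = V(x) V(x + c)`, with `V` the Vandermonde determinant, this
coefficient is `± k!`, so some `y` has `f (α ∘ y) ≠ 0`: then `y` is a permutation and the
`α (y i) + c i` are pairwise distinct.
-/

open Finset Polynomial
open scoped Nat

namespace Lagrange

theorem coeff_card_sub_one_eq_sum_nodalWeight_mul {F ι : Type*} [Field F] [DecidableEq ι]
    {s : Finset ι} {v : ι → F} (hvs : Set.InjOn v s) {P : F[X]} (hP : P.degree < #s) :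
    P.coeff (#s - 1) = ∑ i ∈ s, nodalWeight s v i * P.eval (v i) := by
  rw [coeff_eq_sum hvs hP]
  refine sum_congr rfl fun i _ => ?_
  rw [nodalWeight, prod_inv_distrib, div_eq_mul_inv, mul_comm]

end Lagrange

theorem Matrix.det_vandermonde_eq_sum_sign_mul_prod {R : Type*} [CommRing R] {n : ℕ}
    (v : Fin n → R) :
    (vandermonde v).det =
      ∑ σ : Equiv.Perm (Fin n), (Equiv.Perm.sign σ : ℤ) * ∏ i, v i ^ (σ i : ℕ) := by
  rw [← det_transpose, det_apply']
  rfl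

/-- Both sides of `h` sum to `k * k` over `i`, so `h` is an equality. -/
theorem Fin.revPerm_mul_eq_of_le_add {k : ℕ} {σ τ : Equiv.Perm (Fin k)}
    (h : ∀ i, k ≤ (σ i : ℕ) + τ i + 1) : Fin.revPerm * σ = τ := by
  have hrev (i : Fin k) : (i : ℕ) + (i.rev : ℕ) + 1 = k := by rw [Fin.val_rev]; omega
  have hsum : ∑ _i : Fin k, k = ∑ i, ((σ i : ℕ) + τ i + 1) :=
    calc ∑ _i : Fin k, k = ∑ i : Fin k, ((i : ℕ) + (Fin.revPerm i : ℕ) + 1) :=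
          sum_congr rfl fun i _ => (hrev i).symm
      _ = ∑ i, ((σ i : ℕ) + τ i + 1) := by
          simp only [sum_add_distrib, Equiv.sum_comp, Equiv.sum_comp σ (fun i => (i : ℕ))]
  have heq := (sum_eq_sum_iff_of_le fun i _ => h i).1 hsum
  ext i
  have := heq i (mem_univ i)
  have := hrev (σ i)
  simp only [Equiv.Perm.mul_apply, Fin.revPerm_apply]
  omega

section Field

variable {F : Type*} [Field F] {k : ℕ}

theorem sum_nodalWeight_mul_pow_mul_add_pow {α : Fin k → F} (hα : Function.Injective α)
    {s t : ℕ} (hst : s + t < k) (c : F) :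
    ∑ j, Lagrange.nodalWeight univ α j * (α j ^ s * (α j + c) ^ t)
      = if s + t + 1 = k then 1 else 0 := by
  have hmonic : (X ^ s * (X + C c) ^ t : F[X]).Monic :=
    (monic_X_pow s).mul ((monic_X_add_C c).pow t)
  have hdeg : (X ^ s * (X + C c) ^ t : F[X]).natDegree = s + t := by
    rw [(monic_X_pow s).natDegree_mul ((monic_X_add_C c).pow t), natDegree_X_pow,
      natDegree_pow, natDegree_X_add_C, mul_one]
  have hcoeff := Lagrange.coeff_card_sub_one_eq_sum_nodalWeight_mul hα.injOn
    (P := X ^ s * (X + C c) ^ t) (by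
      rw [degree_eq_natDegree hmonic.ne_zero, hdeg, card_univ, Fintype.card_fin]
      exact_mod_cast hst)
  simp only [card_univ, Fintype.card_fin, eval_mul, eval_pow, eval_X, eval_add, eval_C] at hcoeff
  rw [← hcoeff]
  split_ifs with h
  · rw [show k - 1 = (X ^ s * (X + C c) ^ t : F[X]).natDegree by omega, hmonic.coeff_natDegree]
  · exact coeff_eq_zero_of_natDegree_lt (by omega)

theorem sum_prod_nodalWeight_mul_pow_mul_add_pow {α : Fin k → F} (hα : Function.Injective α)
    (c : Fin k → F) (σ τ : Equiv.Perm (Fin k)) :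
    ∑ y : Fin k → Fin k, ∏ i, Lagrange.nodalWeight univ α (y i) *
        (α (y i) ^ (σ i : ℕ) * (α (y i) + c i) ^ (τ i : ℕ))
      = if Fin.revPerm * σ = τ then 1 else 0 := by
  rw [← Fintype.prod_sum fun i j =>
    Lagrange.nodalWeight univ α j * (α j ^ (σ i : ℕ) * (α j + c i) ^ (τ i : ℕ))]
  split_ifs with h
  · refine prod_eq_one fun i _ => ?_
    have hi : (σ i : ℕ) + τ i + 1 = k := by
      rw [← h, Equiv.Perm.mul_apply, Fin.revPerm_apply, Fin.val_rev]
      omega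
    rw [sum_nodalWeight_mul_pow_mul_add_pow hα (by omega), if_pos hi]
  · obtain ⟨i, hi⟩ : ∃ i, (σ i : ℕ) + τ i + 1 < k := by
      by_contra! hle
      exact h (Fin.revPerm_mul_eq_of_le_add hle)
    refine prod_eq_zero (mem_univ i) ?_
    rw [sum_nodalWeight_mul_pow_mul_add_pow hα (by omega), if_neg hi.ne]

theorem sum_prod_nodalWeight_mul_det_vandermonde_mul_det_vandermonde
    {α : Fin k → F} (hα : Function.Injective α) (c : Fin k → F) :
    ∑ y : Fin k → Fin k, (∏ i, Lagrange.nodalWeight univ α (y i)) *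
        ((Matrix.vandermonde fun i => α (y i)).det *
          (Matrix.vandermonde fun i => α (y i) + c i).det)
      = k ! * (Equiv.Perm.sign (Fin.revPerm (n := k)) : ℤ) := by
  set ε : Equiv.Perm (Fin k) → F := fun σ => (Equiv.Perm.sign σ : ℤ)
  calc _ = ∑ σ, ∑ τ, ε σ * ε τ * ∑ y : Fin k → Fin k,
          ∏ i, Lagrange.nodalWeight univ α (y i) *
            (α (y i) ^ (σ i : ℕ) * (α (y i) + c i) ^ (τ i : ℕ)) := by
        simp_rw [Matrix.det_vandermonde_eq_sum_sign_mul_prod, sum_mul_sum, mul_sum]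
        rw [sum_comm]
        refine sum_congr rfl fun σ _ => ?_
        rw [sum_comm]
        refine sum_congr rfl fun τ _ => sum_congr rfl fun y _ => ?_
        simp only [ε, prod_mul_distrib]
        ring
    _ = ∑ σ, ε σ * ε (Fin.revPerm * σ) := by
        simp_rw [sum_prod_nodalWeight_mul_pow_mul_add_pow hα, mul_ite, mul_one, mul_zero,
          sum_ite_eq, mem_univ, if_true]
    _ = ∑ _σ : Equiv.Perm (Fin k), ε Fin.revPerm := by
        refine sum_congr rfl fun σ _ => ?_
        simp only [ε, Equiv.Perm.sign_mul, Units.val_mul, Int.cast_mul]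
        rw [mul_left_comm, ← Int.cast_mul, ← Units.val_mul, Int.units_mul_self, Units.val_one,
          Int.cast_one, mul_one]
    _ = k ! * ε Fin.revPerm := by
        rw [sum_const, card_univ, Fintype.card_perm, Fintype.card_fin, nsmul_eq_mul]

theorem exists_perm_injective_add_of_factorial_ne_zero (hfac : (k ! : F) ≠ 0)
    {α : Fin k → F} (hα : Function.Injective α) (c : Fin k → F) :
    ∃ π : Equiv.Perm (Fin k), Function.Injective fun i => α i + c (π i) := by
  have hsign : ((Equiv.Perm.sign (Fin.revPerm (n := k)) : ℤ) : F) ≠ 0 := by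
    rcases Int.units_eq_one_or (Equiv.Perm.sign (Fin.revPerm (n := k))) with h | h <;> simp [h]
  obtain ⟨y, -, hy⟩ := exists_ne_zero_of_sum_ne_zero <|
    (sum_prod_nodalWeight_mul_det_vandermonde_mul_det_vandermonde hα c).symm ▸
      mul_ne_zero hfac hsign
  obtain ⟨hdet, hdet_add⟩ := mul_ne_zero_iff.1 (right_ne_zero_of_mul hy)
  have hy_inj : Function.Injective y :=
    (Matrix.det_vandermonde_ne_zero_iff.1 hdet).of_comp (f := α)
  let π := Equiv.ofBijective y hy_inj.bijective_of_finite
  refine ⟨π.symm, ?_⟩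
  convert (Matrix.det_vandermonde_ne_zero_iff.1 hdet_add).comp π.symm.injective using 1
  ext i
  rw [Function.comp_apply, show y (π.symm i) = i from π.apply_symm_apply i]

end Field

theorem ZMod.exists_perm_injective_add {p k : ℕ} [Fact p.Prime] (hkp : k < p)
    {a : Fin k → ZMod p} (ha : Function.Injective a) (b : Fin k → ZMod p) :
    ∃ π : Equiv.Perm (Fin k), Function.Injective fun i => a i + b (π i) := by
  refine exists_perm_injective_add_of_factorial_ne_zero ?_ ha b
  rw [Ne, ZMod.natCast_eq_zero_iff, (Fact.out : p.Prime).dvd_factorial]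
  omega

theorem alon_snevily_prime_general {G : Type*} [CommGroup G] [Fintype G]
    {p : ℕ} (hp : p.Prime) (hG : Fintype.card G = p) {k : ℕ} (hkp : k < p)
    (a b : Fin k → G) (ha : Function.Injective a) :
    ∃ π : Equiv.Perm (Fin k), Function.Injective (fun i => a i * b (π i)) := by
  have : Fact p.Prime := ⟨hp⟩
  let e : G ≃* Multiplicative (ZMod p) :=
    mulEquivOfPrimeCardEq (by rw [Nat.card_eq_fintype_card, hG]) (by simp)
  obtain ⟨π, hπ⟩ := ZMod.exists_perm_injective_add hkp
    (Multiplicative.toAdd.injective.comp (e.injective.comp ha)) fun i => (e (b i)).toAdd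
  refine ⟨π, fun i j hij => hπ ?_⟩
  simpa using congrArg (fun g => (e g).toAdd) hij

/-- Alon's theorem: in a cyclic group of prime order `p`, given `k < p` distinct elements
`a i` and arbitrary elements `b i`, some permutation makes the products distinct. -/
theorem alon_snevily_prime {G : Type*} [CommGroup G] [Fintype G] [IsCyclic G]
    {p : ℕ} (hp : p.Prime) (hG : Fintype.card G = p) {k : ℕ} (hk : 0 < k) (hkp : k < p)
    (a b : Fin k → G) (ha : Function.Injective a) :
    ∃ π : Equiv.Perm (Fin k), Function.Injective (fun i => a i * b (π i)) :=
  alon_snevily_prime_general hp hG hkp a b ha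
end

section
/- Let p be a prime, α a positive integer, and G the cyclic group of order p^α. Let k < p be a positive integer, a_1,...,a_k distinct elements of G, and b_1,...,b_k arbitrary elements of G. Then some permutation π ∈ S_k makes a_1·b_{π(1)}, ..., a_k·b_{π(k)} pairwise distinct. -/
/-!
Embed `G` into the complex `p ^ α`-th roots of unity and write `x i`, `y i` for the images of
`a i`, `b i`. Summing the Vandermonde determinants of `(x i * y (π i))ᵢ` over all permutations
`π` gives `det (vandermonde x) * permanent (vandermonde y)`. The first factor is nonzero because
the `x i` are distinct. The second is the value at a primitive `p ^ (α + 1)`-th root of unity of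
an integer polynomial whose coefficients sum to `k!`; if it vanished, the cyclotomic polynomial
would divide that polynomial, and evaluating at `1` would give `p ∣ k!`, impossible for `k < p`.
So some `π` has a nonzero Vandermonde determinant, i.e. the products `x i * y (π i)` are
distinct.
-/

open Finset Polynomial Matrix

theorem sum_det_vandermonde_mul_perm {R : Type*} [CommRing R] {k : ℕ} (x y : Fin k → R) :
    ∑ π : Equiv.Perm (Fin k), (vandermonde fun i => x i * y (π i)).det
      = (vandermonde x).det * (vandermonde y).permanent := by
  have hperm (σ : Equiv.Perm (Fin k)) :
      ∑ π : Equiv.Perm (Fin k), ∏ i, y (π (σ i)) ^ (i : ℕ) = (vandermonde y).permanent :=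
    Equiv.sum_comp (Equiv.mulRight σ) fun τ => ∏ i, y (τ i) ^ (i : ℕ)
  simp only [det_apply, vandermonde_apply, mul_pow, prod_mul_distrib, sum_mul]
  rw [sum_comm]
  refine sum_congr rfl fun σ _ => ?_
  rw [smul_mul_assoc, ← hperm σ, mul_sum, smul_sum]

theorem prime_dvd_eval_one_of_aeval_eq_zero {K : Type*} [Field K] [CharZero K] {p m : ℕ}
    (hp : p.Prime) {ζ : K} (hζ : IsPrimitiveRoot ζ (p ^ (m + 1))) {Q : ℤ[X]}
    (hQ : aeval ζ Q = 0) : (p : ℤ) ∣ Q.eval 1 := by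
  have : Fact p.Prime := ⟨hp⟩
  have hpos : 0 < p ^ (m + 1) := pow_pos hp.pos _
  obtain ⟨H, rfl⟩ : cyclotomic (p ^ (m + 1)) ℤ ∣ Q := by
    rw [cyclotomic_eq_minpoly hζ hpos]
    exact minpoly.isIntegrallyClosed_dvd (hζ.isIntegral hpos) hQ
  rw [eval_mul, eval_one_cyclotomic_prime_pow]
  exact dvd_mul_right _ _

theorem permanent_vandermonde_ne_zero {K : Type*} [Field K] [CharZero K] {p m k : ℕ}
    (hp : p.Prime) (hkp : k < p) {ζ : K} (hζ : IsPrimitiveRoot ζ (p ^ (m + 1)))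
    {y : Fin k → K} (hy : ∀ i, y i ^ p ^ (m + 1) = 1) : (vandermonde y).permanent ≠ 0 := by
  have : NeZero (p ^ (m + 1)) := ⟨(pow_pos hp.pos _).ne'⟩
  choose e _ he using fun i => hζ.eq_pow_of_pow_eq_one (hy i)
  set Q : ℤ[X] := ∑ π : Equiv.Perm (Fin k), X ^ ∑ i : Fin k, e (π i) * i
  have hQ : aeval ζ Q = (vandermonde y).permanent := by
    simp [Q, permanent, vandermonde_apply, ← he, ← pow_mul, prod_pow_eq_pow_sum]
  have hQ1 : Q.eval 1 = k.factorial := by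
    simp [Q, eval_finsetSum, Fintype.card_perm]
  intro h
  have := prime_dvd_eval_one_of_aeval_eq_zero hp hζ (hQ.trans h)
  rw [hQ1, Int.natCast_dvd_natCast, hp.dvd_factorial] at this
  omega

theorem exists_perm_injective_mul_of_pow_eq_one {K : Type*} [Field K] [CharZero K]
    {p m k : ℕ} (hp : p.Prime) (hkp : k < p) {ζ : K} (hζ : IsPrimitiveRoot ζ (p ^ (m + 1)))
    {x y : Fin k → K} (hx : Function.Injective x) (hy : ∀ i, y i ^ p ^ (m + 1) = 1) :
    ∃ π : Equiv.Perm (Fin k), Function.Injective fun i => x i * y (π i) := by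
  have hsum : ∑ π : Equiv.Perm (Fin k), (vandermonde fun i => x i * y (π i)).det ≠ 0 := by
    rw [sum_det_vandermonde_mul_perm]
    exact mul_ne_zero (det_vandermonde_ne_zero_iff.mpr hx)
      (permanent_vandermonde_ne_zero hp hkp hζ hy)
  obtain ⟨π, -, hπ⟩ := exists_ne_zero_of_sum_ne_zero hsum
  exact ⟨π, det_vandermonde_ne_zero_iff.mp hπ⟩

theorem dkss_cyclic_prime_power_general {G : Type*} [CommGroup G] [Fintype G] [IsCyclic G]
    {p α : ℕ} (hp : p.Prime) (hG : Fintype.card G = p ^ α)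
    {k : ℕ} (hkp : k < p)
    (a b : Fin k → G) (ha : Function.Injective a) :
    ∃ π : Equiv.Perm (Fin k), Function.Injective (fun i => a i * b (π i)) := by
  have : NeZero (p ^ α) := ⟨(pow_pos hp.pos _).ne'⟩
  let e : G ≃* rootsOfUnity (p ^ α) ℂ :=
    mulEquivOfCyclicCardEq (by rw [Nat.card_eq_fintype_card, hG, Complex.card_rootsOfUnity])
  let φ : G →* ℂ :=
    (Units.coeHom ℂ).comp ((rootsOfUnity (p ^ α) ℂ).subtype.comp e.toMonoidHom)
  have hφ : Function.Injective φ :=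
    Units.val_injective.comp (Subtype.val_injective.comp e.injective)
  -- `p ^ (α + 1)` rather than `p ^ α`: the cyclotomic argument needs a positive power of `p`.
  have hφ_pow (g : G) : φ g ^ p ^ (α + 1) = 1 := by
    have hg : (e g : ℂˣ) ^ p ^ α = 1 := (mem_rootsOfUnity _ _).mp (e g).2
    simp [φ, pow_succ, pow_mul, ← Units.val_pow_eq_pow_val, hg]
  obtain ⟨π, hπ⟩ := exists_perm_injective_mul_of_pow_eq_one hp hkp
    (Complex.isPrimitiveRoot_exp _ (pow_pos hp.pos (α + 1)).ne') (hφ.comp ha)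
    fun i => hφ_pow (b i)
  refine ⟨π, fun i j hij => hπ ?_⟩
  simpa only [Function.comp_apply, ← map_mul] using congrArg φ hij

/-- DKSS theorem, cyclic prime-power case: in a cyclic group of order `p^α`, given
`k < p` distinct elements `a i` and arbitrary `b i`, some permutation makes the
products distinct. -/
theorem dkss_cyclic_prime_power {G : Type*} [CommGroup G] [Fintype G] [IsCyclic G]
    {p α : ℕ} (hp : p.Prime) (hα : 0 < α) (hG : Fintype.card G = p ^ α)
    {k : ℕ} (hk : 0 < k) (hkp : k < p)
    (a b : Fin k → G) (ha : Function.Injective a) :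
    ∃ π : Equiv.Perm (Fin k), Function.Injective (fun i => a i * b (π i)) :=
  dkss_cyclic_prime_power_general hp hG hkp a b ha
end

section
/- Let G be a finite abelian group, A = {a_1,...,a_k} a k-subset of G, and b_1,...,b_k elements of G. Suppose that either A or B = {b_1,...,b_k} is contained in a subgroup H of G such that the smallest prime divisor of |H| is greater than k and every other prime divisor of |H| is greater than k!. Then there exists a permutation π ∈ S_k such that a_1·b_{π(1)}, ..., a_k·b_{π(k)} are pairwise distinct. -/
/-!
Choose characters `χ₁, …, χₖ` of `G` with `det (χₛ(aᵢ)) ≠ 0`; they exist because the evaluations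
at distinct elements are linearly independent functions on the dual group. Summing
`det (χₛ(aᵢ) χₛ(b_π(i)))` over all permutations `π` gives `det (χₛ(aᵢ)) · per (χₛ(bⱼ))`, and the
permanent is a sum of `k!` roots of unity whose orders divide `|H|`. A vanishing sum of fewer than
`q` roots of unity of order `q^(c+1) M` splits, along the `q`-part, into vanishing sums of roots
of order `M` (the minimal polynomial of a primitive `q^(c+1)`-th root over `ℚ(ζ_M)` is still
cyclotomic); hence the length of a vanishing sum is divisible by the least prime `p` of `|H|`,
which is impossible for `k!` terms since `p > k`. So some summand is nonzero, and its matrix has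
distinct columns `aᵢ b_π(i)`. When only the `aᵢ` lie in `H`, do this in each coset class of the
`bⱼ` separately.
-/

open Polynomial IntermediateField Matrix Equiv

theorem IsPrimitiveRoot.mul_of_coprime {M : Type*} [CommMonoid M] {x y : M} {m n : ℕ}
    (hx : IsPrimitiveRoot x m) (hy : IsPrimitiveRoot y n) (hmn : m.Coprime n) :
    IsPrimitiveRoot (x * y) (m * n) := by
  obtain rfl := hx.eq_orderOf
  obtain rfl := hy.eq_orderOf
  rw [← Commute.orderOf_mul_eq_mul_orderOf_of_coprime (Commute.all x y) hmn]
  exact IsPrimitiveRoot.orderOf _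

theorem IsPrimitiveRoot.minpoly_adjoin_eq_cyclotomic {F : Type*} [Field F] [CharZero F]
    {μ ξ : F} {m n : ℕ} (hμ : IsPrimitiveRoot μ m) (hξ : IsPrimitiveRoot ξ n) (hm : 0 < m)
    (hn : 0 < n) (hmn : m.Coprime n) : minpoly ℚ⟮μ⟯ ξ = cyclotomic n ℚ⟮μ⟯ := by
  have hμℚ : IsIntegral ℚ μ := (hμ.isIntegral hm).tower_top
  have hξK : IsIntegral ℚ⟮μ⟯ ξ := (hξ.isIntegral hn).tower_top
  have hμξ : IsIntegral ℚ (μ * ξ) :=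
    ((hμ.mul_of_coprime hξ hmn).isIntegral (by positivity)).tower_top
  have := adjoin.finiteDimensional hμℚ
  have := adjoin.finiteDimensional hξK
  have : FiniteDimensional ℚ ℚ⟮μ⟯⟮ξ⟯ := Module.Finite.trans ℚ⟮μ⟯ _
  have : FiniteDimensional ℚ ((ℚ⟮μ⟯⟮ξ⟯).restrictScalars ℚ) := this
  have hdvd : minpoly ℚ⟮μ⟯ ξ ∣ cyclotomic n ℚ⟮μ⟯ := by
    refine minpoly.dvd _ _ ?_
    rw [aeval_def, eval₂_eq_eval_map, map_cyclotomic]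
    exact hξ.isRoot_cyclotomic hn
  have hle : ℚ⟮μ * ξ⟯ ≤ (ℚ⟮μ⟯⟮ξ⟯).restrictScalars ℚ := by
    rw [adjoin_simple_le_iff]
    exact mul_mem (algebraMap_mem _ (AdjoinSimple.gen ℚ μ)) (mem_adjoin_simple_self _ ξ)
  -- `φ m * φ n = [ℚ(μξ) : ℚ] ≤ [ℚ(μ)(ξ) : ℚ] = φ m * [ℚ(μ)(ξ) : ℚ(μ)]`
  have hdeg : (cyclotomic n ℚ⟮μ⟯).natDegree ≤ (minpoly ℚ⟮μ⟯ ξ).natDegree := by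
    have htower := Module.finrank_mul_finrank ℚ ℚ⟮μ⟯ ℚ⟮μ⟯⟮ξ⟯
    have := finrank_le_of_le_right hle
    rw [adjoin.finrank hμξ, ← cyclotomic_eq_minpoly_rat (hμ.mul_of_coprime hξ hmn) (by positivity),
      natDegree_cyclotomic, Nat.totient_mul hmn] at this
    rw [adjoin.finrank hμℚ, ← cyclotomic_eq_minpoly_rat hμ hm, natDegree_cyclotomic,
      adjoin.finrank hξK] at htower
    rw [natDegree_cyclotomic]
    exact Nat.le_of_mul_le_mul_left (htower ▸ this) (Nat.totient_pos.mpr hm)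
  exact (eq_of_monic_of_dvd_of_natDegree_le (minpoly.monic hξK) (cyclotomic.monic n _)
    hdvd hdeg).symm

theorem Polynomial.coeff_geom_sum_X_pow_mul {R : Type*} [Semiring R] {d q : ℕ} {Q : R[X]}
    (hQ : Q.natDegree < d) {r j : ℕ} (hr : r < d) (hj : j < q) :
    ((∑ i ∈ Finset.range q, (X ^ d) ^ i) * Q).coeff (r + d * j) = Q.coeff r := by
  rw [Finset.sum_mul, finsetSum_coeff, Finset.sum_eq_single j]
  · rw [← pow_mul, coeff_X_pow_mul', if_pos (by omega), Nat.add_sub_cancel]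
  · intro i _ hij
    rw [← pow_mul, coeff_X_pow_mul']
    split_ifs with hle
    · refine coeff_eq_zero_of_natDegree_lt ?_
      rcases Nat.lt_or_gt_of_ne hij with hlt | hgt
      · have : d * i + d ≤ d * j := by nlinarith
        omega
      · have : d * j + d ≤ d * i := by nlinarith
        omega
    · rfl
  · exact fun h => absurd (Finset.mem_range.mpr hj) h

-- `cyclotomic (q ^ (c + 1)) = ∑ j < q, X ^ (q ^ c * j)`, so a multiple `Φ * Q` of degree
-- `< q ^ (c + 1)` repeats the leading coefficient of `Q` at `q` different degrees.
theorem Polynomial.eq_zero_of_cyclotomic_prime_pow_dvd {R : Type*} [CommRing R] {q c : ℕ}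
    (hq : q.Prime) {P : R[X]} (hdvd : cyclotomic (q ^ (c + 1)) R ∣ P)
    (hdeg : P.natDegree < q ^ (c + 1)) (hsupp : P.support.card < q) : P = 0 := by
  obtain ⟨Q, rfl⟩ := hdvd
  by_contra hP
  have hQ : Q ≠ 0 := by rintro rfl; exact hP (mul_zero _)
  have : Nontrivial R := Polynomial.nontrivial_iff.mp (nontrivial_of_ne Q 0 hQ)
  have hd : 0 < q ^ c := pow_pos hq.pos c
  have hQdeg : Q.natDegree < q ^ c := by
    rw [(cyclotomic.monic _ R).natDegree_mul' hQ, natDegree_cyclotomic,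
      Nat.totient_prime_pow_succ hq] at hdeg
    have : q ^ c * (q - 1) + q ^ c = q ^ (c + 1) := by
      rw [pow_succ, ← Nat.mul_succ, Nat.sub_one, Nat.succ_pred_eq_of_pos hq.pos]
    omega
  have hcoeff : ∀ j ∈ Finset.range q,
      (cyclotomic (q ^ (c + 1)) R * Q).coeff (Q.natDegree + q ^ c * j) = Q.leadingCoeff := by
    intro j hj
    rw [cyclotomic_prime_pow_eq_geom_sum hq]
    exact coeff_geom_sum_X_pow_mul hQdeg hQdeg (Finset.mem_range.mp hj)
  have : q ≤ (cyclotomic (q ^ (c + 1)) R * Q).support.card := by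
    simpa using Finset.card_le_card_of_injOn (s := Finset.range q)
      (t := (cyclotomic (q ^ (c + 1)) R * Q).support) (fun j => Q.natDegree + q ^ c * j)
      (fun j hj => by simpa [hcoeff j hj] using hQ)
      (fun j _ j' _ h => Nat.eq_of_mul_eq_mul_left hd (by simpa using h))
  omega

theorem sum_filter_eq_zero_of_sum_mul_pow_eq_zero {ι K L : Type*} [Field K] [Field L]
    [Algebra K L] {ξ : L} {q c : ℕ} (hq : q.Prime) (hξ : minpoly K ξ = cyclotomic (q ^ (c + 1)) K)
    {s : Finset ι} (hs : s.card < q) {w : ι → K} {e : ι → ℕ} (he : ∀ i ∈ s, e i < q ^ (c + 1))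
    (hsum : ∑ i ∈ s, algebraMap K L (w i) * ξ ^ e i = 0) (r : ℕ) :
    ∑ i ∈ s with e i = r, w i = 0 := by
  classical
  set P : K[X] := ∑ i ∈ s, C (w i) * X ^ e i
  have hcoeff : ∀ r, P.coeff r = ∑ i ∈ s with e i = r, w i := fun r => by
    simp [P, finsetSum_coeff, Finset.sum_filter, eq_comm]
  have hP : P = 0 := by
    refine eq_zero_of_cyclotomic_prime_pow_dvd (c := c) hq ?_ ?_ ?_
    · rw [← hξ]
      exact minpoly.dvd K ξ (by simpa [P] using hsum)
    · refine (natDegree_sum_le_of_forall_le s _ fun i hi => ?_).trans_lt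
        (Nat.pred_lt (pow_pos hq.pos _).ne')
      exact (natDegree_C_mul_X_pow_le _ _).trans (Nat.le_pred_of_lt (he i hi))
    · refine lt_of_le_of_lt (Finset.card_le_card (t := s.image e) fun n hn => ?_)
        (Finset.card_image_le.trans_lt hs)
      rw [mem_support_iff, hcoeff] at hn
      obtain ⟨i, hi, -⟩ := Finset.exists_ne_zero_of_sum_ne_zero hn
      exact Finset.mem_image.mpr ⟨i, (Finset.mem_filter.mp hi).1, (Finset.mem_filter.mp hi).2⟩
  rw [← hcoeff, hP, coeff_zero]

theorem Nat.Prime.sum_filter_pow_eq_zero {ι F : Type*} [Field F] [CharZero F] {q c M : ℕ}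
    (hq : q.Prime) {ξ μ : F} (hξ : IsPrimitiveRoot ξ (q ^ (c + 1))) (hμ : IsPrimitiveRoot μ M)
    (hM : 0 < M) (hcop : (q ^ (c + 1)).Coprime M) {s : Finset ι} (hs : s.card < q) {t : ι → ℕ}
    (hsum : ∑ i ∈ s, (ξ * μ) ^ t i = 0) (r : ℕ) :
    ∑ i ∈ s with t i % q ^ (c + 1) = r, μ ^ t i = 0 := by
  have hqc : 0 < q ^ (c + 1) := pow_pos hq.pos _
  have := sum_filter_eq_zero_of_sum_mul_pow_eq_zero (w := fun i => AdjoinSimple.gen ℚ μ ^ t i)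
    (e := fun i => t i % q ^ (c + 1)) (L := F) hq
    (hμ.minpoly_adjoin_eq_cyclotomic hξ hM hqc hcop.symm) hs (fun i _ => Nat.mod_lt _ hqc) ?_ r
  · simpa using congrArg (algebraMap ℚ⟮μ⟯ F) this
  · rw [← hsum]
    refine Finset.sum_congr rfl fun i _ => ?_
    rw [hξ.eq_orderOf, pow_mod_orderOf, mul_pow, mul_comm]
    simp

theorem Nat.Prime.dvd_card_of_sum_eq_zero_of_pow_prime_pow {ι : Type*} {p a : ℕ} (hp : p.Prime)
    {s : Finset ι} {f : ι → ℂ} (hf : ∀ i ∈ s, f i ^ p ^ a = 1) (hsum : ∑ i ∈ s, f i = 0) :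
    p ∣ s.card := by
  have : Fact p.Prime := ⟨hp⟩
  have hn : 0 < p ^ (a + 1) := pow_pos hp.pos _
  -- Raising the exponent to `a + 1` avoids the degenerate cyclotomic polynomial `X - 1`.
  set ζ := Complex.exp (2 * Real.pi * Complex.I / ↑(p ^ (a + 1)))
  have hζ : IsPrimitiveRoot ζ (p ^ (a + 1)) := Complex.isPrimitiveRoot_exp _ hn.ne'
  have hf' : ∀ i ∈ s, ∃ e, ζ ^ e = f i := fun i hi =>
    (hζ.eq_pow_of_pow_eq_one (by rw [pow_succ, pow_mul, hf i hi, one_pow])).imp fun _ h => h.2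
  choose! e he using hf'
  have hroot : aeval ζ (∑ i ∈ s, X ^ e i : ℤ[X]) = 0 := by
    simpa [Finset.sum_congr rfl he] using hsum
  obtain ⟨Q, hQ⟩ : cyclotomic (p ^ (a + 1)) ℤ ∣ ∑ i ∈ s, X ^ e i := by
    rw [cyclotomic_eq_minpoly hζ hn]
    exact minpoly.isIntegrallyClosed_dvd (hζ.isIntegral hn) hroot
  have := congrArg (eval 1) hQ
  rw [eval_mul, eval_one_cyclotomic_prime_pow, eval_finsetSum] at this
  exact Int.natCast_dvd_natCast.mp ⟨_, by simpa using this⟩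

theorem Nat.Prime.dvd_card_of_sum_eq_zero {ι : Type*} {p N : ℕ} (hp : p.Prime) (hN : N ≠ 0)
    {s : Finset ι} (hs : ∀ q, q.Prime → q ∣ N → q ≠ p → s.card < q) {f : ι → ℂ}
    (hf : ∀ i ∈ s, f i ^ N = 1) (hsum : ∑ i ∈ s, f i = 0) : p ∣ s.card := by
  classical
  induction N using Nat.strong_induction_on generalizing s f with | _ N ih =>
  by_cases hpow : ∀ q, q.Prime → q ∣ N → q = p
  · rw [Nat.eq_prime_pow_of_unique_prime_dvd hN fun hq hqN => hpow _ hq hqN] at hf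
    exact hp.dvd_card_of_sum_eq_zero_of_pow_prime_pow hf hsum
  push Not at hpow
  obtain ⟨q, hq, hqN, hqp⟩ := hpow
  obtain ⟨c', M, hqM, rfl⟩ := Nat.exists_eq_pow_mul_and_not_dvd hN q hq.ne_one
  obtain ⟨c, rfl⟩ : ∃ c, c' = c + 1 :=
    Nat.exists_eq_add_one.mpr (Nat.pos_of_ne_zero fun h => hqM (by simpa [h] using hqN))
  have hM : M ≠ 0 := right_ne_zero_of_mul hN
  have hqc : 0 < q ^ (c + 1) := pow_pos hq.pos _
  have hcop : (q ^ (c + 1)).Coprime M := Nat.Coprime.pow_left _ (hq.coprime_iff_not_dvd.mpr hqM)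
  set ξ := Complex.exp (2 * Real.pi * Complex.I / ↑(q ^ (c + 1)))
  set μ := Complex.exp (2 * Real.pi * Complex.I / ↑M)
  have hξ : IsPrimitiveRoot ξ (q ^ (c + 1)) := Complex.isPrimitiveRoot_exp _ hqc.ne'
  have hμ : IsPrimitiveRoot μ M := Complex.isPrimitiveRoot_exp _ hM
  have : NeZero (q ^ (c + 1) * M) := ⟨hN⟩
  have hf' : ∀ i ∈ s, ∃ t, (ξ * μ) ^ t = f i := fun i hi =>
    ((hξ.mul_of_coprime hμ hcop).eq_pow_of_pow_eq_one (hf i hi)).imp fun _ h => h.2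
  choose! t ht using hf'
  have hfib := hq.sum_filter_pow_eq_zero hξ hμ (Nat.pos_of_ne_zero hM) hcop
    (hs q hq (dvd_mul_of_dvd_left (dvd_pow_self q c.succ_ne_zero) M) hqp)
    (t := t) (by rwa [← Finset.sum_congr rfl ht] at hsum)
  have hcard : s.card = ∑ r ∈ Finset.range (q ^ (c + 1)),
      (s.filter fun i => t i % q ^ (c + 1) = r).card :=
    Finset.card_eq_sum_card_fiberwise fun i _ => Finset.mem_range.mpr (Nat.mod_lt _ hqc)
  rw [hcard]
  refine Finset.dvd_sum fun r _ => ih M ?_ hM (fun q' hq' hq'M hq'p => ?_) (fun i hi => ?_) (hfib r)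
  · exact lt_mul_of_one_lt_left (Nat.pos_of_ne_zero hM) (Nat.one_lt_pow c.succ_ne_zero hq.one_lt)
  · exact (Finset.card_filter_le _ _).trans_lt (hs q' hq' (dvd_mul_of_dvd_right hq'M _) hq'p)
  · rw [← pow_mul, mul_comm, pow_mul, hμ.pow_eq_one, one_pow]

theorem LinearIndependent.exists_det_ne_zero_fin {F X : Type*} [Field F] :
    ∀ {n : ℕ} {v : Fin n → X → F}, LinearIndependent F v →
      ∃ g : Fin n → X, (of fun s i => v i (g s)).det ≠ 0
  | 0, _, _ => ⟨Fin.elim0, by simp⟩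
  | n + 1, v, hv => by
    obtain ⟨g, hg⟩ := exists_det_ne_zero_fin (hv.comp _ (Fin.castSucc_injective n))
    -- Expanding along the last row, the determinant is a combination of the `v j`
    -- whose last coefficient is the nonzero minor `hg`.
    set c : Fin (n + 1) → F := fun j =>
      (-1) ^ (n + j : ℕ) * (of fun s i => v (j.succAbove i) (g s)).det
    have hc : ∑ j, c j • v j ≠ 0 := fun h => by
      have := Fintype.linearIndependent_iff.mp hv c h (Fin.last n)
      simp only [c, Fin.val_last, Fin.succAbove_last, ← two_mul, pow_mul, neg_one_sq, one_pow,
        one_mul] at this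
      exact hg this
    obtain ⟨x, hx⟩ := Function.ne_iff.mp hc
    refine ⟨Fin.snoc (α := fun _ => X) g x, ?_⟩
    have hminor : ∀ j : Fin (n + 1),
        (of fun s i => v i (Fin.snoc (α := fun _ => X) g x s)).submatrix Fin.castSucc j.succAbove
          = of fun s i => v (j.succAbove i) (g s) := fun j => by ext; simp
    rw [det_succ_row _ (Fin.last n)]
    simpa [c, hminor, mul_comm, mul_left_comm, mul_assoc] using hx

theorem LinearIndependent.exists_det_ne_zero {ι F X : Type*} [Fintype ι] [DecidableEq ι]
    [Field F] {v : ι → X → F} (hv : LinearIndependent F v) :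
    ∃ g : ι → X, (of fun s i => v i (g s)).det ≠ 0 := by
  let e := Fintype.equivFin ι
  obtain ⟨g, hg⟩ := (hv.comp _ e.symm.injective).exists_det_ne_zero_fin
  refine ⟨g ∘ e, fun h => hg ?_⟩
  rw [← det_reindex_self e.symm]
  convert h using 2
  ext s i
  simp

theorem CommGroup.linearIndependent_apply {G ι : Type*} [CommGroup G] [Finite G] {a : ι → G}
    (ha : Function.Injective a) :
    LinearIndependent ℂ fun i (χ : G →* ℂˣ) => (χ (a i) : ℂ) := by
  let E : G → (G →* ℂˣ) →* ℂ := fun g => (Units.coeHom ℂ).comp (MonoidHom.eval g)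
  have hE : Function.Injective E := fun g g' h =>
    (CommGroup.forall_apply_eq_apply_iff G).mp fun χ => Units.ext (DFunLike.congr_fun h χ)
  exact (linearIndependent_monoidHom (G →* ℂˣ) ℂ).comp (E ∘ a) (hE.comp ha)

theorem Matrix.permanent_eq_sum_prod_perm {n R : Type*} [Fintype n] [DecidableEq n] [CommRing R]
    (B : Matrix n n R) (σ : Perm n) : B.permanent = ∑ π : Perm n, ∏ i, B (σ i) (π i) := by
  refine Fintype.sum_equiv ((Equiv.inv _).trans (Equiv.mulRight σ)) _ _ fun τ => ?_
  change ∏ i, B (τ i) i = ∏ i, B (σ i) (τ⁻¹ (σ i))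
  rw [Equiv.prod_comp σ fun j => B j (τ⁻¹ j), ← Equiv.prod_comp τ fun j => B j (τ⁻¹ j)]
  simp

theorem Matrix.sum_det_mul_apply_perm {n R : Type*} [Fintype n] [DecidableEq n] [CommRing R]
    (A B : Matrix n n R) :
    ∑ π : Perm n, (of fun i j => A i j * B i (π j)).det = A.det * B.permanent := by
  simp only [det_apply, of_apply, Finset.prod_mul_distrib, Finset.sum_mul]
  rw [Finset.sum_comm]
  refine Finset.sum_congr rfl fun σ _ => ?_
  rw [permanent_eq_sum_prod_perm B σ, Finset.mul_sum]
  simp only [smul_mul_assoc]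

open Nat in
theorem exists_perm_mul_injective_of_pow_eq_one {G ι : Type*} [CommGroup G] [Finite G]
    [Fintype ι] [DecidableEq ι] {p N : ℕ} (hp : p.Prime) (hN : N ≠ 0)
    (hιp : Fintype.card ι < p) (hfac : ∀ q, q.Prime → q ∣ N → q ≠ p → (Fintype.card ι)! < q)
    {a b : ι → G} (ha : Function.Injective a) (hb : ∀ j, b j ^ N = 1) :
    ∃ π : Perm ι, Function.Injective fun i => a i * b (π i) := by
  obtain ⟨χ, hχ⟩ := (CommGroup.linearIndependent_apply ha).exists_det_ne_zero
  set A : Matrix ι ι ℂ := of fun s i => (χ s (a i) : ℂ)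
  set B : Matrix ι ι ℂ := of fun s j => (χ s (b j) : ℂ)
  -- `B.permanent` is a sum of `(card ι)!` roots of unity of order dividing `N`.
  have hper : B.permanent ≠ 0 := fun h => by
    have hdvd := hp.dvd_card_of_sum_eq_zero hN (s := Finset.univ)
      (f := fun σ : Perm ι => ∏ i, B (σ i) i) (fun q hq hqN hqp => ?_) (fun σ _ => ?_) h
    · rw [Finset.card_univ, Fintype.card_perm] at hdvd
      exact hιp.not_ge (hp.dvd_factorial.mp hdvd)
    · rw [Finset.card_univ, Fintype.card_perm]
      exact hfac q hq hqN hqp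
    · rw [← Finset.prod_pow]
      exact Finset.prod_eq_one fun i _ => by simp [B, ← Units.val_pow_eq_pow_val, ← map_pow, hb]
  have hsum : ∑ π : Perm ι, (of fun s i => A s i * B s (π i)).det ≠ 0 := by
    rw [sum_det_mul_apply_perm]
    exact mul_ne_zero hχ hper
  obtain ⟨π, -, hπ⟩ := Finset.exists_ne_zero_of_sum_ne_zero hsum
  refine ⟨π, fun i i' h => by_contra fun hii' => hπ (det_zero_of_column_eq hii' fun s => ?_)⟩
  simp [A, B, ← Units.val_mul, ← map_mul, h]

theorem exists_perm_mul_injective_of_fiberwise {G ι : Type*} [CommGroup G] (H : Subgroup G)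
    {a b : ι → G} (ha : ∀ i, a i ∈ H)
    (hfib : ∀ c : G ⧸ H, ∃ σ : Perm {j // (b j : G ⧸ H) = c},
      Function.Injective fun j : {j // (b j : G ⧸ H) = c} => a j * b (σ j)) :
    ∃ π : Perm ι, Function.Injective fun i => a i * b (π i) := by
  choose σ hσ using hfib
  set π := (sigmaFiberEquiv fun j => (b j : G ⧸ H)).permCongr (Perm.sigmaCongrRight σ)
  have hπ : ∀ c j (h : (b j : G ⧸ H) = c), π j = σ c ⟨j, h⟩ := by
    rintro c j rfl
    rfl
  refine ⟨π, fun i i' (h : a i * b (π i) = a i' * b (π i')) => ?_⟩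
  have hcoset : (b i : G ⧸ H) = b i' := by
    rw [← (σ _ ⟨i, rfl⟩).2, ← (σ _ ⟨i', rfl⟩).2, ← hπ _ i rfl, ← hπ _ i' rfl,
      QuotientGroup.eq_iff_div_mem, show b (π i) / b (π i') = a i' / a i from
        div_eq_div_iff_mul_eq_mul.mpr (by rw [mul_comm, h])]
    exact H.div_mem (ha i') (ha i)
  rw [hπ _ i rfl, hπ _ i' hcoset.symm] at h
  exact congrArg Subtype.val (@hσ _ ⟨i, rfl⟩ ⟨i', hcoset.symm⟩ h)

theorem feng_sun_xiang_main_general {G : Type*} [CommGroup G] [Fintype G] {k : ℕ}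
    (a b : Fin k → G) (ha : Function.Injective a) (H : Subgroup G)
    (hH1 : 1 < Nat.card H)
    (hmin : k < (Nat.card H).minFac)
    (hother : ∀ q : ℕ, q.Prime → q ∣ Nat.card H → q ≠ (Nat.card H).minFac →
      Nat.factorial k < q)
    (hAB : (∀ i, a i ∈ H) ∨ (∀ i, b i ∈ H)) :
    ∃ π : Equiv.Perm (Fin k), Function.Injective (fun i => a i * b (π i)) := by
  classical
  have hpow : ∀ x ∈ H, x ^ Nat.card H = 1 := fun x hx =>
    Subtype.ext_iff.mp (pow_card_eq_one' (x := (⟨x, hx⟩ : H)))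
  have hcore : ∀ {κ : Type} [Fintype κ] [DecidableEq κ] {a' b' : κ → G},
      Fintype.card κ ≤ k → Function.Injective a' → (∀ j, b' j ∈ H) →
      ∃ π : Perm κ, Function.Injective fun i => a' i * b' (π i) := fun hκ ha' hb' =>
    exists_perm_mul_injective_of_pow_eq_one (Nat.minFac_prime hH1.ne') Nat.card_pos.ne'
      (hκ.trans_lt hmin) (fun q hq hqH hqp => (Nat.factorial_le hκ).trans_lt (hother q hq hqH hqp))
      ha' fun j => hpow _ (hb' j)
  rcases hAB with hA | hB
  · refine exists_perm_mul_injective_of_fiberwise H hA fun c => ?_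
    rcases isEmpty_or_nonempty {j // (b j : G ⧸ H) = c} with hc | ⟨j₀, hj₀⟩
    · exact ⟨1, Function.injective_of_subsingleton _⟩
    obtain ⟨σ, hσ⟩ := hcore (a' := fun j : {j // (b j : G ⧸ H) = c} => a j)
      (b' := fun j => b j / b j₀) ((Fintype.card_subtype_le _).trans_eq (Fintype.card_fin k))
      (ha.comp Subtype.val_injective) fun j => QuotientGroup.eq_iff_div_mem.mp (j.2.trans hj₀.symm)
    exact ⟨σ, fun j j' h => hσ (by simp only [← mul_div_assoc, h])⟩
  · exact hcore (Fintype.card_fin k).le ha hB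

/-- Main theorem: if the distinct elements `a i` (or all the `b i`) lie in a subgroup `H`
whose order is `k`-large (least prime divisor `> k`, every other prime divisor `> k!`),
then some permutation makes the products `a i * b (π i)` distinct. -/
theorem feng_sun_xiang_main {G : Type*} [CommGroup G] [Fintype G] {k : ℕ} (hk : 0 < k)
    (a b : Fin k → G) (ha : Function.Injective a) (H : Subgroup G)
    (hH1 : 1 < Nat.card H)
    (hmin : k < (Nat.card H).minFac)
    (hother : ∀ q : ℕ, q.Prime → q ∣ Nat.card H → q ≠ (Nat.card H).minFac →
      Nat.factorial k < q)
    (hAB : (∀ i, a i ∈ H) ∨ (∀ i, b i ∈ H)) :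
    ∃ π : Equiv.Perm (Fin k), Function.Injective (fun i => a i * b (π i)) :=
  feng_sun_xiang_main_general a b ha H hH1 hmin hother hAB
end

section
/- Let p be a prime, G a finite abelian p-group, and k a positive integer with k < p. If a_1,...,a_k are distinct elements of G and b_1,...,b_k are arbitrary elements of G, then there is a permutation π ∈ S_k such that a_1·b_{π(1)}, ..., a_k·b_{π(k)} are pairwise distinct. -/
/-!
Work in the group algebra `𝔽_p[Gᵏ]` and let `A = ∑ π, sign π • [a ∘ π]` be the antisymmetrization
of `[a]`; since `a` is injective, the coefficient of `A` at `a` is `1`. If every rearrangement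
`b * a ∘ π` has a repeated entry, antisymmetrizing `[b] * A` kills each of its terms, so
`k! • A = -Alt (([b] - 1) * A)`. Here `k!` is invertible because `k < p`, and `[b] - 1` is
nilpotent because `G` is a `p`-group. As `Alt` preserves the powers of the nilradical, `A` lies in
all of them, so `A = 0`.
-/

open Equiv MonoidAlgebra Function Finset

theorem map_mem_nilradical_pow {R F : Type*} [CommRing R] [FunLike F R R] [RingHomClass F R R]
    (f : F) {m : ℕ} {x : R} (hx : x ∈ nilradical R ^ m) : f x ∈ nilradical R ^ m := by
  have hle : (nilradical R).map f ≤ nilradical R :=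
    Ideal.map_le_iff_le_comap.2 fun y hy => mem_nilradical.2 ((mem_nilradical.1 hy).map f)
  exact Ideal.pow_right_mono hle m (Ideal.map_pow f _ m ▸ Ideal.mem_map_of_mem f hx)

theorem eq_zero_of_eq_apply_mul {R : Type*} [CommRing R] {I : Ideal R} (hI : IsNilpotent I)
    {f : R → R} (hf : ∀ m, Set.MapsTo f ↑(I ^ m) ↑(I ^ m)) {x y : R} (hy : y ∈ I)
    (hx : x = f (y * x)) : x = 0 := by
  have hmem : ∀ m, x ∈ I ^ m := by
    intro m
    induction m with
    | zero => simp
    | succ m ih => exact hx ▸ hf (m + 1) (pow_succ' I m ▸ Ideal.mul_mem_mul hy ih)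
  obtain ⟨n, hn⟩ := hI
  simpa [hn] using hmem n

theorem isNilpotent_sub_one_of_pow_eq_one {R : Type*} [CommRing R] {p : ℕ} [Fact p.Prime]
    [CharP R p] {x : R} {n : ℕ} (hx : x ^ p ^ n = 1) : IsNilpotent (x - 1) :=
  ⟨p ^ n, by rw [sub_pow_char_pow, hx, one_pow, sub_self]⟩

namespace MonoidAlgebra

section Antisymmetrize

variable {S M ι : Type*} [CommRing S] [Monoid M]

noncomputable def permDomCongr (τ : Perm ι) :
    MonoidAlgebra S (ι → M) ≃ₐ[S] MonoidAlgebra S (ι → M) :=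
  domCongr S S (MulEquiv.arrowCongr τ (MulEquiv.refl M))

@[simp]
theorem permDomCongr_single (τ : Perm ι) (v : ι → M) (c : S) :
    permDomCongr τ (single v c) = single (v ∘ ⇑τ⁻¹) c := by
  rw [permDomCongr, domCongr_single]
  rfl

theorem permDomCongr_mul_apply (τ ρ : Perm ι) (x : MonoidAlgebra S (ι → M)) :
    permDomCongr (τ * ρ) x = permDomCongr τ (permDomCongr ρ x) := by
  rw [permDomCongr, permDomCongr, permDomCongr, ← AlgEquiv.trans_apply, trans_domCongr_domCongr]
  rfl

variable [Fintype ι] [DecidableEq ι]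

noncomputable def antisymmetrize : MonoidAlgebra S (ι → M) →ₗ[S] MonoidAlgebra S (ι → M) :=
  ∑ τ : Perm ι, Perm.sign τ • (permDomCongr τ).toLinearMap

theorem antisymmetrize_apply (x : MonoidAlgebra S (ι → M)) :
    antisymmetrize x = ∑ τ : Perm ι, Perm.sign τ • permDomCongr τ x := by
  simp [antisymmetrize]

theorem antisymmetrize_permDomCongr (τ : Perm ι) (x : MonoidAlgebra S (ι → M)) :
    antisymmetrize (permDomCongr τ x) = Perm.sign τ • antisymmetrize x := by
  simp only [antisymmetrize_apply, ← permDomCongr_mul_apply, smul_sum, smul_smul]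
  refine Fintype.sum_equiv (Equiv.mulRight τ) _ _ fun ρ => ?_
  rw [Equiv.coe_mulRight, Perm.sign_mul, mul_comm (Perm.sign τ), mul_assoc, Int.units_mul_self,
    mul_one]

theorem antisymmetrize_antisymmetrize (x : MonoidAlgebra S (ι → M)) :
    antisymmetrize (antisymmetrize x) = Fintype.card (Perm ι) • antisymmetrize x := by
  conv_lhs => rw [antisymmetrize_apply x]
  simp only [map_sum, LinearMap.CompatibleSMul.map_smul, antisymmetrize_permDomCongr, smul_smul,
    Int.units_mul_self, one_smul, sum_const, card_univ]

theorem antisymmetrize_single_of_not_injective {v : ι → M} (hv : ¬Injective v) (c : S) :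
    antisymmetrize (single v c) = 0 := by
  obtain ⟨i, j, hvij, hij⟩ := Function.not_injective_iff.1 hv
  have hswap : permDomCongr (swap i j) (single v c) = single v c := by
    rw [permDomCongr_single, swap_inv]
    congr 1
    funext x
    rcases eq_or_ne x i with rfl | hxi
    · simp [hvij]
    rcases eq_or_ne x j with rfl | hxj
    · simp [hvij]
    · simp [swap_apply_of_ne_of_ne hxi hxj]
  rw [antisymmetrize_apply]
  refine sum_involution (fun τ _ => τ * swap i j) (fun τ _ => ?_) (fun τ _ _ => ?_)
    (fun _ _ => mem_univ _) (fun τ _ => by simp)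
  · rw [permDomCongr_mul_apply, hswap, Perm.sign_mul, Perm.sign_swap hij, mul_neg_one,
      Units.neg_smul, add_neg_cancel]
  · simpa using hij

theorem coeff_antisymmetrize_single_self {v : ι → M} (hv : Injective v) (c : S) :
    (antisymmetrize (single v c)).coeff v = c := by
  rw [antisymmetrize_apply, coeff_sum, Finsupp.finsetSum_apply, sum_eq_single 1]
  · simp
  · intro τ _ hτ
    have hne : v ∘ τ.symm ≠ v := fun h =>
      hτ (Perm.ext fun i => by simpa using (hv (congrFun h (τ i))).symm)
    simp [hne]
  · simp

end Antisymmetrize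

section CommMonoid

variable {S M ι : Type*} [CommRing S] [CommMonoid M] [Fintype ι] [DecidableEq ι]

theorem antisymmetrize_mem_nilradical_pow {m : ℕ} {x : MonoidAlgebra S (ι → M)}
    (hx : x ∈ nilradical (MonoidAlgebra S (ι → M)) ^ m) :
    antisymmetrize x ∈ nilradical (MonoidAlgebra S (ι → M)) ^ m := by
  rw [antisymmetrize_apply]
  exact sum_mem fun τ _ => Submodule.smul_of_tower_mem _ _ (map_mem_nilradical_pow _ hx)

theorem antisymmetrize_single_mul_antisymmetrize_single {u v : ι → M}
    (h : ∀ τ : Perm ι, ¬Injective (u * v ∘ τ)) (c d : S) :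
    antisymmetrize (single u c * antisymmetrize (single v d)) = 0 := by
  simp only [antisymmetrize_apply (single v d), mul_sum, map_sum, permDomCongr_single,
    mul_smul_comm, single_mul_single, LinearMap.CompatibleSMul.map_smul]
  exact sum_eq_zero fun τ _ => by
    rw [antisymmetrize_single_of_not_injective (h τ⁻¹), smul_zero]

theorem antisymmetrize_single_eq_zero {u v : ι → M}
    (hcard : IsUnit (Fintype.card (Perm ι) : S))
    (hnil : IsNilpotent (nilradical (MonoidAlgebra S (ι → M))))
    (hu : IsNilpotent (single u 1 - 1 : MonoidAlgebra S (ι → M)))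
    (h : ∀ τ : Perm ι, ¬Injective (u * v ∘ τ)) :
    antisymmetrize (single v (1 : S)) = 0 := by
  set A := antisymmetrize (single v (1 : S))
  have hsum : (Fintype.card (Perm ι) : S) • A + antisymmetrize ((single u 1 - 1) * A) = 0 := by
    rw [Nat.cast_smul_eq_nsmul, ← antisymmetrize_antisymmetrize, ← map_add,
      ← antisymmetrize_single_mul_antisymmetrize_single h 1 1]
    congr 1
    ring
  have hfix : A = -(↑hcard.unit⁻¹ : S) • antisymmetrize ((single u 1 - 1) * A) := by
    rw [eq_neg_of_add_eq_zero_right hsum, smul_neg, neg_smul, neg_neg, smul_smul,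
      IsUnit.val_inv_mul, one_smul]
  refine eq_zero_of_eq_apply_mul hnil (f := fun x => -(↑hcard.unit⁻¹ : S) • antisymmetrize x)
    (fun m x hx => ?_) (mem_nilradical.2 hu) hfix
  exact Submodule.smul_of_tower_mem _ _ (antisymmetrize_mem_nilradical_pow hx)

end CommMonoid

end MonoidAlgebra

theorem dkss_p_group_general {G : Type*} [CommGroup G] [Fintype G] {p : ℕ} (hp : p.Prime)
    (hG : IsPGroup p G) {k : ℕ} (hkp : k < p)
    (a b : Fin k → G) (ha : Function.Injective a) :
    ∃ π : Equiv.Perm (Fin k), Function.Injective (fun i => a i * b (π i)) := by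
  classical
  have := Fact.mk hp
  by_contra! hcon
  have : Finite (MonoidAlgebra (ZMod p) (Fin k → G)) := Finite.of_equiv _ coeffEquiv.symm
  have : CharP (MonoidAlgebra (ZMod p) (Fin k → G)) p := charP_of_injective_algebraMap' (ZMod p) p
  have hcard : IsUnit (Fintype.card (Perm (Fin k)) : ZMod p) := by
    rw [Fintype.card_perm, Fintype.card_fin]
    exact Ne.isUnit fun h => by
      rw [ZMod.natCast_eq_zero_iff, hp.dvd_factorial] at h
      omega
  obtain ⟨n, hn⟩ := IsPGroup.iff_card.1 hG
  obtain ⟨N, hN⟩ := IsPGroup.of_card (p := p) (G := Fin k → G) (n := n * k)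
    (by rw [Nat.card_fun, hn, Nat.card_fin, pow_mul]) b
  have hb : IsNilpotent (single b 1 - 1 : MonoidAlgebra (ZMod p) (Fin k → G)) :=
    isNilpotent_sub_one_of_pow_eq_one (by rw [single_pow, hN, one_pow]; rfl)
  have hcollision : ∀ τ : Perm (Fin k), ¬Injective (b * a ∘ τ) := fun τ hinj =>
    hcon τ⁻¹ (by simpa [Function.comp_def, mul_comm] using hinj.comp τ⁻¹.injective)
  have hA := antisymmetrize_single_eq_zero hcard (IsNoetherianRing.isNilpotent_nilradical _) hb
    hcollision
  simpa [hA] using coeff_antisymmetrize_single_self ha (1 : ZMod p)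

/-- DKSS conjecture for abelian `p`-groups: if `G` is a finite abelian `p`-group,
`k < p`, the `a i` are distinct and the `b i` arbitrary, then some permutation makes
the products distinct. -/
theorem dkss_p_group {G : Type*} [CommGroup G] [Fintype G] {p : ℕ} (hp : p.Prime)
    (hG : IsPGroup p G) {k : ℕ} (hk : 0 < k) (hkp : k < p)
    (a b : Fin k → G) (ha : Function.Injective a) :
    ∃ π : Equiv.Perm (Fin k), Function.Injective (fun i => a i * b (π i)) :=
  dkss_p_group_general hp hG hkp a b ha
end

section
/- Let G be a finite abelian group with |G| > 1, let a be a non-identity element of G, let p(G) be the smallest prime divisor of |G|, and let k < p(G) be a positive integer. For any (not necessarily distinct) b_1,...,b_k ∈ G, there is a permutation π ∈ S_k such that the products a^1·b_{π(1)}, a^2·b_{π(2)}, ..., a^k·b_{π(k)} are pairwise distinct. -/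
/-!
Take a character `χ : G → ℂˣ` with `χ a ≠ 1` and a prime `q` dividing the order of `χ a`.
Its power `ψ = χ ^ m`, with `m` the `q'`-part of `|G|`, still satisfies `ψ a ≠ 1` and takes
values in the `q ^ T`-th roots of unity. As `k < p(G) ≤ q ≤ ord (ψ a)`, the numbers
`A i = ψ a ^ (i + 1)` are distinct, and it suffices to find `σ` making the `A i * ψ (b (σ i))`
distinct. Expanding Vandermonde determinants `V` gives, with `B j = ψ (b j)`,
`∑ σ, sign σ • V (B i * A (σ i)) = (∑ τ, ∏ i, B (τ i) ^ i) * V A`,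
so some `σ` works once `∑ τ, ∏ i, B (τ i) ^ i ≠ 0`. That is a sum of `k!` powers of a
primitive `q ^ T`-th root of unity; if it vanished, the `q ^ T`-th cyclotomic polynomial would
divide the corresponding integer polynomial, and evaluating at `1` would give `q ∣ k!`,
impossible as `k < q`.
-/

open Finset Matrix Equiv Equiv.Perm Function Polynomial

theorem sum_sign_smul_det_vandermonde_mul_comp {R : Type*} [CommRing R] {r : ℕ}
    (A B : Fin r → R) :
    ∑ σ : Perm (Fin r), sign σ • det (vandermonde fun i => B i * A (σ i)) =
      (∑ τ : Perm (Fin r), ∏ i, B (τ i) ^ (i : ℕ)) * det (vandermonde A) := by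
  simp_rw [det_apply (vandermonde A), det_apply, vandermonde_apply, mul_pow, prod_mul_distrib,
    smul_sum, sum_mul, mul_sum]
  rw [sum_comm]
  refine sum_congr rfl fun τ _ => ?_
  conv_rhs => rw [← Equiv.sum_comp (Equiv.mulRight τ)]
  refine sum_congr rfl fun σ _ => ?_
  simp only [coe_mulRight, Perm.sign_mul, Perm.mul_apply, mul_smul, mul_smul_comm,
    smul_comm (sign σ)]

theorem exists_perm_injective_mul {R : Type*} [CommRing R] [IsDomain R] {r : ℕ}
    {A B : Fin r → R} (hA : Injective A)
    (hB : ∑ τ : Perm (Fin r), ∏ i, B (τ i) ^ (i : ℕ) ≠ 0) :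
    ∃ σ : Perm (Fin r), Injective fun i => A i * B (σ i) := by
  have hsum := sum_sign_smul_det_vandermonde_mul_comp A B ▸
    mul_ne_zero hB (det_vandermonde_ne_zero_iff.mpr hA)
  obtain ⟨σ, -, hσ⟩ := exists_ne_zero_of_sum_ne_zero hsum
  have hinj := det_vandermonde_ne_zero_iff.mp (right_ne_zero_of_smul hσ)
  refine ⟨σ⁻¹, fun i j hij => σ⁻¹.injective (hinj ?_)⟩
  simpa [mul_comm] using hij

theorem IsPrimitiveRoot.dvd_card_of_sum_pow_eq_zero {K : Type*} [Field K] [CharZero K]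
    {q T : ℕ} (hq : q.Prime) (hT : 0 < T) {ω : K} (hω : IsPrimitiveRoot ω (q ^ T))
    {ι : Type*} (s : Finset ι) (n : ι → ℕ) (h : ∑ i ∈ s, ω ^ n i = 0) : q ∣ #s := by
  have := Fact.mk hq
  have hqT : 0 < q ^ T := pow_pos hq.pos T
  set P : ℤ[X] := ∑ i ∈ s, X ^ n i
  have hP : cyclotomic (q ^ T) ℤ ∣ P := by
    rw [cyclotomic_eq_minpoly hω hqT]
    exact minpoly.isIntegrallyClosed_dvd (hω.isIntegral hqT) (by simpa [P] using h)
  obtain ⟨T, rfl⟩ := Nat.exists_eq_add_of_lt hT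
  have := eval_dvd (x := 1) hP
  rw [eval_one_cyclotomic_prime_pow] at this
  exact_mod_cast (by simpa [P, eval_finsetSum] using this : (q : ℤ) ∣ #s)

theorem IsPrimitiveRoot.sum_prod_pow_ne_zero {K : Type*} [Field K] [CharZero K]
    {q T r : ℕ} (hq : q.Prime) (hT : 0 < T) {ω : K} (hω : IsPrimitiveRoot ω (q ^ T))
    (hr : r < q) {B : Fin r → K} (hB : ∀ j, B j ^ q ^ T = 1) :
    ∑ τ : Perm (Fin r), ∏ i, B (τ i) ^ (i : ℕ) ≠ 0 := by
  have : NeZero (q ^ T) := ⟨pow_ne_zero T hq.ne_zero⟩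
  choose e he using fun j => (hω.eq_pow_of_pow_eq_one (hB j)).imp fun _ => And.right
  intro h
  have hdvd := hω.dvd_card_of_sum_pow_eq_zero hq hT univ
    (fun τ : Perm (Fin r) => ∑ i, e (τ i) * i)
    (by simpa [← he, ← pow_mul, prod_pow_eq_pow_sum] using h)
  rw [card_univ, Fintype.card_perm, Fintype.card_fin, hq.dvd_factorial] at hdvd
  omega

theorem le_orderOf_of_pow_prime_pow_eq_one {M : Type*} [Monoid M] {q T : ℕ} (hq : q.Prime)
    {y : M} (hy : y ^ q ^ T = 1) (hy1 : y ≠ 1) : q ≤ orderOf y := by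
  obtain ⟨s, -, hs⟩ := (Nat.dvd_prime_pow hq).1 (orderOf_dvd_of_pow_eq_one hy)
  have hs0 : s ≠ 0 := by
    rintro rfl
    exact hy1 (orderOf_eq_one_iff.mp (by simpa using hs))
  exact hs ▸ Nat.le_self_pow hs0 q

theorem CommGroup.exists_monoidHom_apply_ne_one_pow_eq_one {G : Type*} [CommGroup G] [Fintype G]
    {a : G} (ha : a ≠ 1) :
    ∃ q, q.Prime ∧ q ∣ Fintype.card G ∧ ∃ ψ : G →* ℂˣ,
      ψ a ≠ 1 ∧ ∀ g, ψ g ^ q ^ (Fintype.card G).factorization q = 1 := by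
  have : NeZero (Monoid.exponent G : ℂ) :=
    ⟨Nat.cast_ne_zero.mpr Monoid.exponent_ne_zero_of_finite⟩
  obtain ⟨χ, hχ⟩ := CommGroup.exists_apply_ne_one_of_hasEnoughRootsOfUnity G ℂ ha
  set n := Fintype.card G
  set q := (orderOf (χ a)).minFac
  have hq : q.Prime := Nat.minFac_prime (mt orderOf_eq_one_iff.mp hχ)
  have hqa : q ∣ orderOf (χ a) := Nat.minFac_dvd _
  have hqn : q ∣ n := hqa.trans ((orderOf_map_dvd χ a).trans orderOf_dvd_card)
  refine ⟨q, hq, hqn, χ ^ (n / q ^ n.factorization q), fun h => ?_, fun g => ?_⟩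
  · rw [MonoidHom.pow_apply, ← orderOf_dvd_iff_pow_eq_one] at h
    exact Nat.not_dvd_ordCompl hq Fintype.card_ne_zero (hqa.trans h)
  · rw [MonoidHom.pow_apply, ← pow_mul, mul_comm, Nat.ordProj_mul_ordCompl_eq_self, ← map_pow,
      pow_card_eq_one, map_one]

theorem powers_snevily_general {G : Type*} [CommGroup G] [Fintype G]
    (a : G) (haa : a ≠ 1)
    {k : ℕ} (hkp : k < (Fintype.card G).minFac) (b : Fin k → G) :
    ∃ π : Equiv.Perm (Fin k),
      Function.Injective (fun i : Fin k => a ^ ((i : ℕ) + 1) * b (π i)) := by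
  obtain ⟨q, hq, hqG, ψ, hψa, hψ⟩ := CommGroup.exists_monoidHom_apply_ne_one_pow_eq_one haa
  set T := (Fintype.card G).factorization q
  have hT : 0 < T := hq.factorization_pos_of_dvd Fintype.card_ne_zero hqG
  have hkq : k < q := hkp.trans_le (Nat.minFac_le_of_dvd hq.two_le hqG)
  have hA : Injective fun i : Fin k => ((ψ a ^ ((i : ℕ) + 1) : ℂˣ) : ℂ) := by
    have hqψ := le_orderOf_of_pow_prime_pow_eq_one hq (hψ a) hψa
    intro i j hij
    have hlt : ∀ l : Fin k, (l : ℕ) + 1 ∈ Set.Iio (orderOf (ψ a)) := fun l => by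
      simp only [Set.mem_Iio]; omega
    exact Fin.ext <| by
      simpa using pow_injOn_Iio_orderOf (hlt i) (hlt j) (Units.val_injective hij)
  have hB : ∀ j, ((ψ (b j) : ℂˣ) : ℂ) ^ q ^ T = 1 := fun j => by
    rw [← Units.val_pow_eq_pow_val, hψ, Units.val_one]
  obtain ⟨σ, hσ⟩ := exists_perm_injective_mul hA
    ((Complex.isPrimitiveRoot_exp _ (pow_ne_zero T hq.ne_zero)).sum_prod_pow_ne_zero hq hT hkq hB)
  refine ⟨σ, fun i j hij => hσ ?_⟩
  simpa only [map_mul, map_pow, Units.val_mul] using congrArg (fun g => (ψ g : ℂ)) hij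

/-- Corollary 1.7: for `a ≠ 1` in a nontrivial finite abelian group `G` and
`k < p(G)` (least prime divisor of `|G|`), some permutation makes the products
`a^(i+1) * b (π i)`, `i = 0, ..., k-1`, pairwise distinct. -/
theorem powers_snevily {G : Type*} [CommGroup G] [Fintype G]
    (hG : 1 < Fintype.card G) (a : G) (haa : a ≠ 1)
    {k : ℕ} (hk : 0 < k) (hkp : k < (Fintype.card G).minFac) (b : Fin k → G) :
    ∃ π : Equiv.Perm (Fin k),
      Function.Injective (fun i : Fin k => a ^ ((i : ℕ) + 1) * b (π i)) :=
  powers_snevily_general a haa hkp b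
end

section
/- Let G be a finite cyclic group and let m ≥ 3 be odd. For i = 1,...,m let A_i = {a_{i1},...,a_{ik}} be a k-subset of G. Then there exist permutations π_2,...,π_m ∈ S_k such that the products a_{1j}·a_{2π_2(j)}···a_{mπ_m(j)}, for j = 1,...,k, are pairwise distinct. -/
/-!
Embed `G` into `ℂˣ`, so that each `A_i` becomes a list `θ_i` of distinct complex numbers. Expanding
the Vandermonde determinants, the signed sum
`∑_π (∏_i sign π_i) · det V(j ↦ ∏_i θ_i(π_i j))` equals `∑_σ (sign σ)^(m+1) ∏_i det V(θ_i)`,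
which is `k! ∏_i det V(θ_i) ≠ 0` because `m + 1` is even. Hence some `π` gives a nonzero
Vandermonde determinant, i.e. pairwise distinct products.
-/

open Finset Equiv Equiv.Perm Matrix Function

lemma IsCyclic.exists_monoidHom_units_injective (G M : Type*) [CommGroup G] [Finite G]
    [IsCyclic G] [CommMonoid M] [HasEnoughRootsOfUnity M (Nat.card G)] :
    ∃ ψ : G →* Mˣ, Injective ψ := by
  have : NeZero (Nat.card G) := ⟨Nat.card_pos.ne'⟩
  let e : G ≃* rootsOfUnity (Nat.card G) M :=
    mulEquivOfCyclicCardEq (HasEnoughRootsOfUnity.natCard_rootsOfUnity M _).symm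
  exact ⟨(rootsOfUnity _ M).subtype.comp e.toMonoidHom, Subtype.val_injective.comp e.injective⟩

section Vandermonde

variable {R : Type*} [CommRing R] {m k : ℕ}

lemma sum_sign_mul_prod_pow_mul_perm (θ : Fin k → R) (σ : Perm (Fin k)) :
    ∑ τ : Perm (Fin k), (sign τ : R) * ∏ j, θ ((τ * σ) j) ^ (j : ℕ)
      = sign σ * det (vandermonde θ) := by
  rw [← sign_inv, ← det_permute', det_apply']
  refine Fintype.sum_congr _ _ fun τ => ?_
  congr 1
  exact Fintype.prod_equiv σ _ _ fun j => by simp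

lemma prod_sign_mul_det_vandermonde_prod (θ : Fin m → Fin k → R) (π : Fin m → Perm (Fin k)) :
    (∏ i, (sign (π i) : R)) * det (vandermonde fun j => ∏ i, θ i (π i j))
      = ∑ σ : Perm (Fin k), (sign σ : R) *
          ∏ i, ((sign (π i) : R) * ∏ j, θ i ((π i * σ) j) ^ (j : ℕ)) := by
  rw [det_apply', mul_sum]
  refine Fintype.sum_congr _ _ fun σ => ?_
  simp only [vandermonde_apply, ← prod_pow, Perm.mul_apply, prod_mul_distrib]
  rw [prod_comm]
  ring

theorem sum_prod_sign_mul_det_vandermonde_prod (θ : Fin m → Fin k → R) :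
    ∑ π : Fin m → Perm (Fin k),
        (∏ i, (sign (π i) : R)) * det (vandermonde fun j => ∏ i, θ i (π i j))
      = ∑ σ : Perm (Fin k), (sign σ : R) ^ (m + 1) * ∏ i, det (vandermonde (θ i)) := by
  calc _ = ∑ σ : Perm (Fin k), (sign σ : R) *
          ∏ i, ∑ τ : Perm (Fin k), (sign τ : R) * ∏ j, θ i ((τ * σ) j) ^ (j : ℕ) := by
        simp only [prod_sign_mul_det_vandermonde_prod, Fintype.prod_sum, mul_sum]
        exact sum_comm
    _ = ∑ σ : Perm (Fin k), (sign σ : R) * ∏ i, ((sign σ : R) * det (vandermonde (θ i))) := by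
        simp only [sum_sign_mul_prod_pow_mul_perm]
    _ = _ := by
        refine sum_congr rfl fun σ _ => ?_
        rw [prod_mul_distrib, prod_const, card_univ, Fintype.card_fin]
        ring

theorem sum_prod_sign_mul_det_vandermonde_prod_of_odd (hm : Odd m) (θ : Fin m → Fin k → R) :
    ∑ π : Fin m → Perm (Fin k),
        (∏ i, (sign (π i) : R)) * det (vandermonde fun j => ∏ i, θ i (π i j))
      = (k.factorial : R) * ∏ i, det (vandermonde (θ i)) := by
  have hsign (σ : Perm (Fin k)) : (sign σ : R) ^ (m + 1) = 1 := by
    rw [← Int.cast_pow, ← Units.val_pow_eq_pow_val, Int.units_pow_eq_pow_mod_two,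
      Nat.even_iff.1 hm.add_one, pow_zero, Units.val_one, Int.cast_one]
  simp [sum_prod_sign_mul_det_vandermonde_prod, hsign, Fintype.card_perm]

theorem exists_perm_injective_prod_of_odd [IsDomain R] [CharZero R] (hm : Odd m)
    (θ : Fin m → Fin k → R) (hθ : ∀ i, Injective (θ i)) :
    ∃ π : Fin m → Perm (Fin k), Injective fun j => ∏ i, θ i (π i j) := by
  have hne : (k.factorial : R) * ∏ i, det (vandermonde (θ i)) ≠ 0 :=
    mul_ne_zero (Nat.cast_ne_zero.2 k.factorial_ne_zero)
      (prod_ne_zero_iff.2 fun i _ => det_vandermonde_ne_zero_iff.2 (hθ i))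
  rw [← sum_prod_sign_mul_det_vandermonde_prod_of_odd hm] at hne
  obtain ⟨π, -, hπ⟩ := exists_ne_zero_of_sum_ne_zero hne
  exact ⟨π, det_vandermonde_ne_zero_iff.1 (right_ne_zero_of_mul hπ)⟩

end Vandermonde

/-- Sun's theorem: for an odd `m ≥ 3` and `k`-subsets `A_1, ..., A_m` of a finite
cyclic group, there are permutations `π_2, ..., π_m` (with `π_1` the identity) such
that the products `a_{1j} a_{2 π_2(j)} ⋯ a_{m π_m(j)}` are pairwise distinct. -/
theorem sun_odd_products {G : Type*} [CommGroup G] [Fintype G] [IsCyclic G]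
    {m k : ℕ} (hm : Odd m) (hm3 : 3 ≤ m)
    (a : Fin m → Fin k → G) (ha : ∀ i, Function.Injective (a i)) :
    ∃ π : Fin m → Equiv.Perm (Fin k), π ⟨0, by omega⟩ = 1 ∧
      Function.Injective (fun j : Fin k => ∏ i, a i (π i j)) := by
  have : NeZero (Nat.card G) := ⟨Nat.card_pos.ne'⟩
  obtain ⟨ψ, hψ⟩ := IsCyclic.exists_monoidHom_units_injective G ℂ
  obtain ⟨π, hπ⟩ := exists_perm_injective_prod_of_odd hm (fun i j => (ψ (a i j) : ℂ))
    fun i => Units.val_injective.comp (hψ.comp (ha i))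
  set π₀ := π ⟨0, by omega⟩
  refine ⟨fun i => π i * π₀⁻¹, mul_inv_cancel π₀, ?_⟩
  refine Injective.of_comp (f := fun g : G => (ψ g : ℂ)) ?_
  convert hπ.comp π₀⁻¹.injective using 1
  funext j
  simp [map_prod]
end

section
/- Let G be a finite abelian group, K a field, and Ĝ the group of homomorphisms from G to K^*. Let a_1,...,a_k, b_1,...,b_k ∈ G and χ_1,...,χ_k ∈ Ĝ. If the determinant of the k×k matrix (χ_i(a_j)) and the permanent of the k×k matrix (χ_i(b_j)) are both nonzero, then there is a permutation π ∈ S_k such that a_1·b_{π(1)}, ..., a_k·b_{π(k)} are pairwise distinct. -/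
/-!
Expanding each determinant along permutations shows that summing
`det (χ i (a j * b (π j)))` over all `π` gives `det (χ i (a j)) * per (χ i (b j))`, which is
nonzero. So some `π` has `det (χ i (a j * b (π j))) ≠ 0`, and a matrix with two equal columns
would have determinant zero, so the products `a j * b (π j)` are pairwise distinct.
-/

open Equiv Finset Matrix

namespace Matrix

variable {n R : Type*} [Fintype n] [DecidableEq n]

theorem sum_prod_apply_perm_eq_permanent [CommSemiring R] (B : Matrix n n R) (σ : Perm n) :
    ∑ π : Perm n, ∏ i, B (σ i) (π i) = B.permanent := by
  rw [← permanent_permute_cols σ, ← permanent_transpose]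
  rfl

theorem sum_det_hadamard_permute_cols [CommRing R] (A B : Matrix n n R) :
    ∑ π : Perm n, (A ⊙ B.submatrix id π).det = A.det * B.permanent := by
  simp only [det_apply, hadamard_apply, submatrix_apply, id, prod_mul_distrib]
  rw [sum_comm, sum_mul]
  refine sum_congr rfl fun σ _ => ?_
  simp only [smul_mul_assoc, ← smul_sum, ← mul_sum, sum_prod_apply_perm_eq_permanent]

theorem injective_of_det_ne_zero {α : Type*} [CommRing R] {f : n → α → R} {c : n → α}
    (h : (of fun i j => f i (c j)).det ≠ 0) : Function.Injective c := fun i j hij => by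
  by_contra hne
  exact h (det_zero_of_column_eq hne fun r => by simp only [of_apply, hij])

end Matrix

theorem det_per_implies_snevily_general {G : Type*} [CommGroup G]
    {K : Type*} [Field K] {k : ℕ} (a b : Fin k → G) (χ : Fin k → (G →* Kˣ))
    (hdet : Matrix.det (Matrix.of fun i j => (χ i (a j) : K)) ≠ 0)
    (hper : (∑ σ : Equiv.Perm (Fin k), ∏ i, (χ i (b (σ i)) : K)) ≠ 0) :
    ∃ π : Equiv.Perm (Fin k), Function.Injective (fun i => a i * b (π i)) := by
  set A : Matrix (Fin k) (Fin k) K := of fun i j => (χ i (a j) : K)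
  set B : Matrix (Fin k) (Fin k) K := of fun i j => (χ i (b j) : K)
  have hB : B.permanent ≠ 0 := by rwa [← permanent_transpose]
  obtain ⟨π, -, hπ⟩ := exists_ne_zero_of_sum_ne_zero <|
    (sum_det_hadamard_permute_cols A B).trans_ne (mul_ne_zero hdet hB)
  have hprod : (of fun i j => (χ i (a j * b (π j)) : K)) = A ⊙ B.submatrix id π := by
    ext i j
    simp [A, B]
  exact ⟨π, injective_of_det_ne_zero (f := fun i g => (χ i g : K)) (hprod ▸ hπ)⟩

/-- Proposition 2.2: if `det (χ_i (a_j)) ≠ 0` and `per (χ_i (b_j)) ≠ 0` for characters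
`χ_i : G →* Kˣ`, then some permutation makes the products `a i * b (π i)` distinct. -/
theorem det_per_implies_snevily {G : Type*} [CommGroup G] [Fintype G]
    {K : Type*} [Field K] {k : ℕ} (a b : Fin k → G) (χ : Fin k → (G →* Kˣ))
    (hdet : Matrix.det (Matrix.of fun i j => (χ i (a j) : K)) ≠ 0)
    (hper : (∑ σ : Equiv.Perm (Fin k), ∏ i, (χ i (b (σ i)) : K)) ≠ 0) :
    ∃ π : Equiv.Perm (Fin k), Function.Injective (fun i => a i * b (π i)) :=
  det_per_implies_snevily_general a b χ hdet hper
end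

section
/- Let G be a finite abelian group and K a field containing an element of multiplicative order |G|. Let Ĝ be the group of characters from G to K^*, and let a_1,...,a_k ∈ G. Then a_1,...,a_k are pairwise distinct if and only if there exist χ_1,...,χ_k ∈ Ĝ such that det(χ_i(a_j))_{1≤i,j≤k} ≠ 0. -/
/-!
Characters separate the points of `G` as soon as `K` has enough roots of unity, so for distinct
`a_j` the functions `χ ↦ χ(a_j)` on the character group are distinct characters of it, hence
linearly independent over `K` (Dedekind–Artin). A linearly independent family of `k` functions
admits `k` points at which the evaluation matrix is invertible: the evaluation vectors span `K^k`,
since a linear form vanishing on all of them gives a linear relation. Conversely, equal `a_i = a_j`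
give two equal columns.
-/

open Matrix Module Submodule

theorem exists_linearIndependent_comp_of_span_range_eq_top {K V ι H : Type*} [DivisionRing K]
    [AddCommGroup V] [Module K V] (b : Basis ι K V) {r : H → V}
    (hr : span K (Set.range r) = ⊤) :
    ∃ p : ι → H, LinearIndependent K (r ∘ p) := by
  let b' := Basis.ofSpan hr.ge
  let e := b.indexEquiv b'
  have hmem (i : ι) : b' (e i) ∈ Set.range r := Basis.ofSpan_subset hr.ge ⟨e i, rfl⟩
  choose p hp using hmem
  refine ⟨p, ?_⟩
  convert b'.linearIndependent.comp e e.injective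
  exact funext hp

theorem LinearIndependent.span_range_eval_eq_top {K ι H : Type*} [Field K] [Fintype ι]
    {v : ι → H → K} (hv : LinearIndependent K v) :
    span K (Set.range fun h j => v j h) = ⊤ := by
  classical
  by_contra hW
  obtain ⟨f, hf, hfW⟩ := exists_dual_map_eq_bot_of_lt_top (lt_top_iff_ne_top.mpr hW) inferInstance
  have hvanish (h : H) : ∑ j, f (Pi.single j 1) * v j h = 0 := by
    have hmem : f (fun j => v j h) ∈ (span K (Set.range fun h j => v j h)).map f :=
      mem_map_of_mem (subset_span ⟨h, rfl⟩)
    rw [hfW, mem_bot, pi_eq_sum_univ' (fun j => v j h), map_sum] at hmem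
    simpa [mul_comm] using hmem
  have hcoeff := Fintype.linearIndependent_iff.mp hv _ (funext fun h => by simpa using hvanish h)
  exact hf ((Pi.basisFun K ι).ext fun j => by simpa using hcoeff j)

theorem LinearIndependent.exists_det_eval_ne_zero {K ι H : Type*} [Field K] [Fintype ι]
    [DecidableEq ι] {v : ι → H → K} (hv : LinearIndependent K v) :
    ∃ p : ι → H, (Matrix.of fun i j => v j (p i)).det ≠ 0 := by
  obtain ⟨p, hp⟩ :=
    exists_linearIndependent_comp_of_span_range_eq_top (Pi.basisFun K ι) hv.span_range_eval_eq_top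
  refine ⟨p, ?_⟩
  rw [← isUnit_iff_ne_zero, ← isUnit_iff_isUnit_det, ← linearIndependent_rows_iff_isUnit]
  exact hp

theorem HasEnoughRootsOfUnity.of_orderOf_eq {R : Type*} [CommRing R] [IsDomain R] {n : ℕ}
    [NeZero n] {x : Rˣ} (hx : orderOf x = n) : HasEnoughRootsOfUnity R n where
  prim := ⟨x, IsPrimitiveRoot.coe_units_iff.mpr (hx ▸ IsPrimitiveRoot.orderOf x)⟩
  cyc := rootsOfUnity.isCyclic R n

theorem CommGroup.linearIndependent_eval_monoidHom_units (G K : Type*) [CommGroup G] [Finite G]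
    [CommRing K] [IsDomain K] [HasEnoughRootsOfUnity K (Monoid.exponent G)] :
    LinearIndependent K fun (g : G) (χ : G →* Kˣ) => (χ g : K) := by
  let ev (g : G) : (G →* Kˣ) →* K := (Units.coeHom K).comp (MonoidHom.eval g)
  have hev : Function.Injective ev := fun g g' h =>
    (forall_apply_eq_apply_iff G).mp fun χ => Units.ext (DFunLike.congr_fun h χ)
  exact (linearIndependent_monoidHom (G →* Kˣ) K).comp ev hev

/-- Lemma 3.1 (first part): if `K` contains an element of multiplicative order `|G|`,
then `a_1, ..., a_k ∈ G` are pairwise distinct iff some characters `χ_1, ..., χ_k`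
of `G` with values in `Kˣ` make `det (χ_i (a_j))` nonzero. -/
theorem distinct_iff_det_ne_zero {G : Type*} [CommGroup G] [Fintype G]
    {K : Type*} [Field K] (hK : ∃ x : Kˣ, orderOf x = Fintype.card G)
    {k : ℕ} (a : Fin k → G) :
    Function.Injective a ↔
      ∃ χ : Fin k → (G →* Kˣ),
        Matrix.det (Matrix.of fun i j => (χ i (a j) : K)) ≠ 0 := by
  obtain ⟨x, hx⟩ := hK
  have := HasEnoughRootsOfUnity.of_orderOf_eq hx
  have := HasEnoughRootsOfUnity.of_dvd K (Group.exponent_dvd_card (G := G))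
  refine ⟨fun ha => ?_, fun ⟨χ, hχ⟩ i j hij => ?_⟩
  · exact ((CommGroup.linearIndependent_eval_monoidHom_units G K).comp a ha).exists_det_eval_ne_zero
  · by_contra hne
    exact hχ (det_zero_of_column_eq hne fun r => by simp [hij])
end

section
/- Let G be a finite abelian group and K a field containing an element of multiplicative order |G|. Let Ĝ = Hom(G, K^*) and let a_1,...,a_k be pairwise distinct elements of G. Then there exist χ_1,...,χ_k ∈ Ĝ such that the permanent per(χ_i(a_j))_{1≤i,j≤k} is nonzero. -/
/-!
Average the permanent over all `k`-tuples of characters, each term weighted by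
`∏ i, χ i (a i)⁻¹`. Expanding the permanent and exchanging the sums turns the average into
`∑ σ, ∏ i, ∑ φ, φ (a (σ i) * (a i)⁻¹)`; by orthogonality of characters and injectivity of `a`
only `σ = 1` survives, so the average is `|G| ^ k`, which is nonzero in `K` because `K` has a
primitive `|G|`-th root of unity. Hence some permanent in the average is nonzero.
-/

open Finset Equiv

theorem IsPrimitiveRoot.hasEnoughRootsOfUnity {R : Type*} [CommRing R] [IsDomain R] {ζ : R}
    {n : ℕ} [NeZero n] (hζ : IsPrimitiveRoot ζ n) : HasEnoughRootsOfUnity R n :=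
  ⟨⟨ζ, hζ⟩, inferInstance⟩

section Orthogonality

variable {G R : Type*} [CommGroup G] [Finite G] [CommRing R] [IsDomain R]
  [HasEnoughRootsOfUnity R (Monoid.exponent G)] [Fintype (G →* Rˣ)]

theorem sum_monoidHom_apply_eq_zero {g : G} (hg : g ≠ 1) :
    ∑ φ : G →* Rˣ, (φ g : R) = 0 := by
  obtain ⟨ψ, hψ⟩ := CommGroup.exists_apply_ne_one_of_hasEnoughRootsOfUnity G R hg
  refine eq_zero_of_mul_eq_self_left (b := (ψ g : R)) (by simpa using hψ) ?_
  rw [mul_sum]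
  exact Fintype.sum_equiv (Equiv.mulLeft ψ) _ _ fun φ ↦ by simp

theorem sum_monoidHom_apply [DecidableEq G] (g : G) :
    ∑ φ : G →* Rˣ, (φ g : R) = if g = 1 then (Nat.card G : R) else 0 := by
  split_ifs with hg
  · simp [hg, ← Nat.card_eq_fintype_card,
      CommGroup.card_monoidHom_of_hasEnoughRootsOfUnity G R]
  · exact sum_monoidHom_apply_eq_zero hg

end Orthogonality

theorem sum_perm_prod_ite_eq_pow {ι R : Type*} [Fintype ι] [DecidableEq ι] [CommSemiring R]
    (c : R) : ∑ σ : Perm ι, ∏ i, (if σ i = i then c else 0) = c ^ Fintype.card ι := by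
  simpa [Matrix.permanent, Matrix.diagonal_apply] using
    Matrix.permanent_diagonal (d := fun _ : ι ↦ c)

theorem sum_pi_monoidHom_mul_sum_perm {G R ι : Type*} [CommGroup G] [CommRing R]
    [Fintype (G →* Rˣ)] [Fintype ι] [DecidableEq ι] (a : ι → G) :
    ∑ χ : ι → (G →* Rˣ), (∏ i, (χ i (a i)⁻¹ : R)) * ∑ σ : Perm ι, ∏ i, (χ i (a (σ i)) : R) =
      ∑ σ : Perm ι, ∏ i, ∑ φ : G →* Rˣ, (φ (a (σ i) * (a i)⁻¹) : R) := by
  simp_rw [Fintype.prod_sum, mul_sum, ← prod_mul_distrib, ← Units.val_mul, ← map_mul, mul_comm]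
  exact sum_comm

theorem sum_pi_monoidHom_mul_sum_perm_eq_pow {G R ι : Type*} [CommGroup G] [Finite G]
    [CommRing R] [IsDomain R] [HasEnoughRootsOfUnity R (Monoid.exponent G)]
    [Fintype (G →* Rˣ)] [Fintype ι] [DecidableEq ι] {a : ι → G} (ha : Function.Injective a) :
    ∑ χ : ι → (G →* Rˣ), (∏ i, (χ i (a i)⁻¹ : R)) * ∑ σ : Perm ι, ∏ i, (χ i (a (σ i)) : R) =
      (Nat.card G : R) ^ Fintype.card ι := by
  classical
  simp_rw [sum_pi_monoidHom_mul_sum_perm, sum_monoidHom_apply, mul_inv_eq_one, ha.eq_iff]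
  exact sum_perm_prod_ite_eq_pow _

/-- Lemma 3.1 (second part): if `K` contains an element of multiplicative order `|G|`
and `a_1, ..., a_k ∈ G` are pairwise distinct, then some characters `χ_1, ..., χ_k`
make the permanent `per (χ_i (a_j))` nonzero. -/
theorem exists_per_ne_zero {G : Type*} [CommGroup G] [Fintype G]
    {K : Type*} [Field K] (hK : ∃ x : Kˣ, orderOf x = Fintype.card G)
    {k : ℕ} (a : Fin k → G) (ha : Function.Injective a) :
    ∃ χ : Fin k → (G →* Kˣ),
      (∑ σ : Equiv.Perm (Fin k), ∏ i, (χ i (a (σ i)) : K)) ≠ 0 := by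
  obtain ⟨x, hx⟩ := hK
  have hζ : IsPrimitiveRoot (x : K) (Fintype.card G) :=
    IsPrimitiveRoot.coe_units_iff.mpr (hx ▸ IsPrimitiveRoot.orderOf x)
  have := hζ.hasEnoughRootsOfUnity
  have : HasEnoughRootsOfUnity K (Monoid.exponent G) := .of_dvd K Group.exponent_dvd_card
  have := Fintype.ofFinite (G →* Kˣ)
  by_contra! hper
  have hsum := sum_pi_monoidHom_mul_sum_perm_eq_pow (R := K) ha
  simp only [hper, mul_zero, sum_const_zero, Nat.card_eq_fintype_card, Fintype.card_fin] at hsum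
  exact pow_ne_zero k hζ.neZero'.out hsum.symm
end

section
/- Let n > 1 be a positive integer whose smallest prime divisor exceeds k and all of whose other prime divisors exceed k!. If ζ_π, for π ∈ S_k, are complex numbers satisfying ζ_π^n = 1 for all π, then Σ_{π∈S_k} ζ_π ≠ 0. -/
/-!
Let `ω` be a primitive `n`-th root of unity, `p = n.minFac`, and write `n = q ^ (a + 1) * m` with
`q ≠ p` prime and `q ∤ m`. Every `n`-th root of unity is `(ω ^ m) ^ e * (ω ^ q ^ (a + 1)) ^ f`
with `e < q ^ (a + 1)`, so a vanishing sum of `N < q` of them is a polynomial `g` of degree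
`< q ^ (a + 1)` in `ω ^ m` with coefficients in `ℚ(μ_m)`. A degree count shows that `ω ^ m` still
has minimal polynomial `Φ_{q^(a+1)} = ∑_{j<q} X ^ (q ^ a * j)` over `ℚ(μ_m)`, and every nonzero
multiple of it of degree `< q ^ (a + 1)` has at least `q` terms. Hence `g = 0`: the sum splits
into vanishing sums of `m`-th roots of unity. Removing the primes other than `p` in this way
leaves `n = p ^ k`, where `Φ_{p^k}(1) = p` divides the number of terms. For the sum over `S_k`
this gives `p ∣ k!`, impossible as `p > k`.
-/

open Polynomial Finset IntermediateField

theorem Polynomial.le_card_support_geom_sum_mul {R : Type*} [Semiring R] (q Q : ℕ) {h : R[X]}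
    (hh : h ≠ 0) (hdeg : h.natDegree < Q) :
    q ≤ ((∑ j ∈ range q, (X : R[X]) ^ (Q * j)) * h).support.card := by
  set g := (∑ j ∈ range q, (X : R[X]) ^ (Q * j)) * h with hg
  set r := h.natDegree
  -- the blocks `X ^ (Q * j) * h` have disjoint supports, since `h` has degree `< Q`
  have hcoeff : ∀ t < q, g.coeff (Q * t + r) = h.coeff r := by
    intro t ht
    rw [hg, sum_mul, finsetSum_coeff, sum_eq_single_of_mem t (mem_range.2 ht)]
    · rw [coeff_X_pow_mul', if_pos (by omega), Nat.add_sub_cancel_left]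
    · intro j _ hjt
      rw [coeff_X_pow_mul']
      split_ifs with hle
      · have hjt : j < t := by
          by_contra! htj
          have : Q * (t + 1) ≤ Q * j := Nat.mul_le_mul_left Q (by omega)
          rw [mul_add_one] at this
          omega
        have : Q * (j + 1) ≤ Q * t := Nat.mul_le_mul_left Q hjt
        rw [mul_add_one] at this
        exact coeff_eq_zero_of_natDegree_lt (by omega)
      · rfl
  have hQ : 0 < Q := by omega
  calc q = #(range q) := (card_range q).symm
    _ ≤ #g.support := card_le_card_of_injOn (fun t => Q * t + r)
        (fun t ht => mem_support_iff.2 <| by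
          rw [hcoeff t (mem_range.1 ht)]; exact leadingCoeff_ne_zero.2 hh)
        (fun a _ b _ hab => Nat.eq_of_mul_eq_mul_left hQ (by simpa using hab))

theorem Polynomial.le_card_support_of_cyclotomic_prime_pow_dvd {R : Type*} [CommRing R]
    {q a : ℕ} (hq : q.Prime) {g : R[X]} (hg : g ≠ 0) (hdvd : cyclotomic (q ^ (a + 1)) R ∣ g)
    (hdeg : g.natDegree < q ^ (a + 1)) : q ≤ #g.support := by
  have : Nontrivial R := nontrivial_iff.1 ⟨⟨g, 0, hg⟩⟩
  obtain ⟨h, rfl⟩ := hdvd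
  have hh : h ≠ 0 := by rintro rfl; simp at hg
  rw [(cyclotomic.monic _ R).natDegree_mul' hh, natDegree_cyclotomic,
    Nat.totient_prime_pow_succ hq, pow_succ] at hdeg
  have : h.natDegree < q ^ a := by
    have := Nat.mul_sub_one (q ^ a) q
    have := Nat.le_mul_of_pos_right (q ^ a) hq.pos
    omega
  simpa only [cyclotomic_prime_pow_eq_geom_sum hq, ← pow_mul] using
    le_card_support_geom_sum_mul q (q ^ a) hh this

theorem exists_zpow_mul_zpow_eq {G₀ : Type*} [GroupWithZero G₀] {x : G₀} (hx : x ≠ 0)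
    {a b : ℕ} (hab : a.Coprime b) : ∃ u v : ℤ, (x ^ a) ^ u * (x ^ b) ^ v = x := by
  obtain ⟨u, v, huv⟩ := hab.isCoprime
  refine ⟨u, v, ?_⟩
  rw [← zpow_natCast, ← zpow_natCast, ← zpow_mul, ← zpow_mul, ← zpow_add₀ hx, mul_comm (a : ℤ),
    mul_comm (b : ℤ), huv, zpow_one]

theorem IsPrimitiveRoot.exists_pow_mul_pow_eq {L : Type*} [Field L] {A m : ℕ} [NeZero A]
    [NeZero m] {ω ζ : L} (hω : IsPrimitiveRoot ω (A * m)) (hAm : A.Coprime m)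
    (hζ : ζ ^ (A * m) = 1) : ∃ e < A, ∃ f, (ω ^ m) ^ e * (ω ^ A) ^ f = ζ := by
  have hζ0 : ζ ≠ 0 := by rintro rfl; simp [NeZero.ne] at hζ
  obtain ⟨u, v, huv⟩ := exists_zpow_mul_zpow_eq hζ0 hAm
  have hpow : ∀ (c d : ℕ) (w : ℤ), c * d = A * m → ((ζ ^ c) ^ w) ^ d = 1 := fun c d w hcd => by
    rw [← zpow_natCast, ← zpow_mul, mul_comm, zpow_mul, zpow_natCast, ← pow_mul, hcd, hζ,
      one_zpow]
  obtain ⟨e, he, hα⟩ := (hω.pow (NeZero.pos _) (mul_comm A m)).eq_pow_of_pow_eq_one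
    (hpow m A v (mul_comm m A))
  obtain ⟨f, -, hβ⟩ := (hω.pow (NeZero.pos _) rfl).eq_pow_of_pow_eq_one (hpow A m u rfl)
  exact ⟨e, he, f, by rw [hα, hβ, mul_comm, huv]⟩

theorem IsPrimitiveRoot.minpoly_adjoin_pow_eq_cyclotomic {L : Type*} [Field L] [CharZero L]
    {A m : ℕ} [NeZero A] [NeZero m] {ω : L} (hω : IsPrimitiveRoot ω (A * m))
    (hAm : A.Coprime m) : minpoly ℚ⟮ω ^ A⟯ (ω ^ m) = cyclotomic A ℚ⟮ω ^ A⟯ := by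
  have hωA : IsPrimitiveRoot (ω ^ A) m := hω.pow (NeZero.pos _) rfl
  have hωm : IsPrimitiveRoot (ω ^ m) A := hω.pow (NeZero.pos _) (mul_comm A m)
  have hintω := (hω.isIntegral (NeZero.pos _)).tower_top (A := ℚ)
  have hintA := (hωA.isIntegral (NeZero.pos _)).tower_top (A := ℚ)
  have hintm := (hωm.isIntegral (NeZero.pos _)).tower_top (A := ℚ⟮ω ^ A⟯)
  have : FiniteDimensional ℚ ℚ⟮ω ^ A⟯ := adjoin.finiteDimensional hintA
  have : FiniteDimensional ℚ⟮ω ^ A⟯ ℚ⟮ω ^ A⟯⟮ω ^ m⟯ := adjoin.finiteDimensional hintm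
  have : FiniteDimensional ℚ (ℚ⟮ω ^ A⟯⟮ω ^ m⟯.restrictScalars ℚ) :=
    .trans ℚ ℚ⟮ω ^ A⟯ ℚ⟮ω ^ A⟯⟮ω ^ m⟯
  have hdvd : minpoly ℚ⟮ω ^ A⟯ (ω ^ m) ∣ cyclotomic A ℚ⟮ω ^ A⟯ := minpoly.dvd _ _ <| by
    rw [aeval_def, ← eval_map, map_cyclotomic]
    exact hωm.isRoot_cyclotomic (NeZero.pos _)
  refine (eq_of_monic_of_dvd_of_natDegree_le (minpoly.monic hintm) (cyclotomic.monic _ _)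
    hdvd ?_).symm
  -- `ℚ⟮ω⟯ ⊆ ℚ⟮ω ^ A, ω ^ m⟯`, so the tower law bounds the degree of `ω ^ m` from below
  have hle : ℚ⟮ω⟯ ≤ ℚ⟮ω ^ A⟯⟮ω ^ m⟯.restrictScalars ℚ := by
    obtain ⟨u, v, huv⟩ := exists_zpow_mul_zpow_eq (hω.ne_zero (NeZero.ne _)) hAm
    rw [adjoin_simple_le_iff, mem_restrictScalars]
    have := mul_mem (zpow_mem (IntermediateField.algebraMap_mem ℚ⟮ω ^ A⟯⟮ω ^ m⟯
      (AdjoinSimple.gen ℚ (ω ^ A))) u) (zpow_mem (mem_adjoin_simple_self ℚ⟮ω ^ A⟯ (ω ^ m)) v)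
    rwa [AdjoinSimple.algebraMap_gen, huv] at this
  have : Module.Free ℚ⟮ω ^ A⟯ ℚ⟮ω ^ A⟯⟮ω ^ m⟯ := .of_divisionRing _ _
  have hrank := finrank_le_of_le_right hle
  rw [adjoin.finrank hintω, ← cyclotomic_eq_minpoly_rat hω (NeZero.pos _), natDegree_cyclotomic,
    Nat.totient_mul hAm, show Module.finrank ℚ (ℚ⟮ω ^ A⟯⟮ω ^ m⟯.restrictScalars ℚ) =
      Module.finrank ℚ ℚ⟮ω ^ A⟯⟮ω ^ m⟯ from rfl,
    ← Module.finrank_mul_finrank ℚ ℚ⟮ω ^ A⟯ ℚ⟮ω ^ A⟯⟮ω ^ m⟯,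
    adjoin.finrank hintA, ← cyclotomic_eq_minpoly_rat hωA (NeZero.pos _), natDegree_cyclotomic,
    adjoin.finrank hintm, mul_comm] at hrank
  rw [natDegree_cyclotomic]
  exact Nat.le_of_mul_le_mul_left hrank (Nat.totient_pos.2 (NeZero.pos _))

theorem IsPrimitiveRoot.eval_one_cyclotomic_dvd_card {L : Type*} [Field L] [CharZero L] {n : ℕ}
    [NeZero n] {ω : L} (hω : IsPrimitiveRoot ω n) {ι : Type*} {s : Finset ι} {ζ : ι → L}
    (hζ : ∀ i ∈ s, ζ i ^ n = 1) (hsum : ∑ i ∈ s, ζ i = 0) :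
    (cyclotomic n ℤ).eval 1 ∣ #s := by
  choose! e _ he using fun i hi => hω.eq_pow_of_pow_eq_one (hζ i hi)
  have hdvd : cyclotomic n ℤ ∣ ∑ i ∈ s, X ^ e i := by
    rw [cyclotomic_eq_minpoly hω (NeZero.pos _)]
    refine minpoly.isIntegrallyClosed_dvd (hω.isIntegral (NeZero.pos _)) ?_
    rw [← hsum, map_sum]
    exact sum_congr rfl fun i hi => by rw [map_pow, aeval_X, he i hi]
  simpa [eval_finsetSum] using eval_dvd (x := 1) hdvd

theorem IsPrimitiveRoot.exists_fiberwise_sum_eq_zero {L : Type*} [Field L] [CharZero L]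
    {q a m : ℕ} [NeZero m] (hq : q.Prime) (hqm : q.Coprime m) {ω : L}
    (hω : IsPrimitiveRoot ω (q ^ (a + 1) * m)) {ι : Type*} {s : Finset ι} {ζ : ι → L}
    (hζ : ∀ i ∈ s, ζ i ^ (q ^ (a + 1) * m) = 1) (hs : #s < q) (hsum : ∑ i ∈ s, ζ i = 0) :
    ∃ (e : ι → ℕ) (η : ι → L), (∀ i ∈ s, η i ^ m = 1) ∧
      ∀ c, ∑ i ∈ s with e i = c, η i = 0 := by
  set A := q ^ (a + 1)
  have : NeZero A := ⟨pow_ne_zero _ hq.ne_zero⟩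
  have hAm : A.Coprime m := hqm.pow_left _
  choose! e he f hf using fun i hi => hω.exists_pow_mul_pow_eq hAm (hζ i hi)
  refine ⟨e, fun i => (ω ^ A) ^ f i, fun i _ => ?_, ?_⟩
  · rw [← pow_mul, mul_comm, pow_mul, (hω.pow (NeZero.pos _) rfl).pow_eq_one, one_pow]
  set g : ℚ⟮ω ^ A⟯[X] := ∑ i ∈ s, C (AdjoinSimple.gen ℚ (ω ^ A) ^ f i) * X ^ e i
  have hcoeff : ∀ c, g.coeff c = ∑ i ∈ s with e i = c, AdjoinSimple.gen ℚ (ω ^ A) ^ f i := by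
    intro c
    simp only [g, finsetSum_coeff, coeff_C_mul_X_pow, sum_filter, eq_comm]
  have hg : g = 0 := by
    by_contra hg
    have hdvd : cyclotomic A ℚ⟮ω ^ A⟯ ∣ g := by
      rw [← hω.minpoly_adjoin_pow_eq_cyclotomic hAm]
      refine minpoly.dvd _ _ ?_
      rw [← hsum, map_sum]
      refine sum_congr rfl fun i hi => ?_
      simp only [← hf i hi, map_mul, map_pow, aeval_X, aeval_C, AdjoinSimple.algebraMap_gen,
        mul_comm]
    have hdeg : g.natDegree < A := by
      refine lt_of_le_of_lt (natDegree_sum_le_of_forall_le _ _ fun i hi => ?_)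
        (Nat.sub_one_lt (NeZero.ne A))
      exact natDegree_C_mul_X_pow_le _ _ |>.trans (Nat.le_sub_one_of_lt (he i hi))
    have hsupp : g.support ⊆ s.image e := fun c hc => by
      by_contra hce
      refine mem_support_iff.1 hc ?_
      rw [hcoeff, sum_eq_zero]
      intro i hi
      exact absurd (mem_image.2 ⟨i, (mem_filter.1 hi).1, (mem_filter.1 hi).2⟩) hce
    have := le_card_support_of_cyclotomic_prime_pow_dvd hq hg hdvd hdeg
    have := (card_le_card hsupp).trans card_image_le
    omega
  intro c
  simpa [hg] using congrArg (algebraMap ℚ⟮ω ^ A⟯ L) (hcoeff c).symm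

theorem IsPrimitiveRoot.prime_dvd_card_of_sum_eq_zero {L : Type*} [Field L] [CharZero L]
    {p : ℕ} (hp : p.Prime) {n : ℕ} [NeZero n] {ω : L} (hω : IsPrimitiveRoot ω n) {ι : Type*}
    {s : Finset ι} {ζ : ι → L} (hζ : ∀ i ∈ s, ζ i ^ n = 1)
    (hlarge : ∀ q, q.Prime → q ∣ n → q ≠ p → #s < q) (hsum : ∑ i ∈ s, ζ i = 0) : p ∣ #s := by
  revert ‹NeZero n›
  induction n using Nat.strong_induction_on generalizing ω s ζ with
  | _ n ih =>
  intro
  by_cases hpow : ∀ q, q.Prime → q ∣ n → q = p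
  · have hdvd := hω.eval_one_cyclotomic_dvd_card hζ hsum
    obtain ⟨k, hn⟩ : ∃ k, n = p ^ k :=
      ⟨_, Nat.eq_prime_pow_of_unique_prime_dvd (NeZero.ne n) (hpow _)⟩
    rw [hn] at hdvd
    rcases k with _ | k
    · obtain rfl : s = ∅ := by simpa using hdvd
      simp
    · have : Fact p.Prime := ⟨hp⟩
      rwa [eval_one_cyclotomic_prime_pow, Int.natCast_dvd_natCast] at hdvd
  push Not at hpow
  obtain ⟨q, hq, hqn, hqp⟩ := hpow
  obtain ⟨e, m, hqm, rfl⟩ := Nat.exists_eq_pow_mul_and_not_dvd (NeZero.ne n) q hq.ne_one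
  obtain ⟨a, rfl⟩ : ∃ a, e = a + 1 :=
    Nat.exists_eq_succ_of_ne_zero fun he => hqm (by simpa [he] using hqn)
  have : NeZero m := ⟨right_ne_zero_of_mul (NeZero.ne (q ^ (a + 1) * m))⟩
  obtain ⟨e, η, hη, hfiber⟩ := hω.exists_fiberwise_sum_eq_zero hq
    ((hq.coprime_iff_not_dvd).2 hqm) hζ (hlarge q hq hqn hqp) hsum
  have hm : m < q ^ (a + 1) * m :=
    lt_mul_left (NeZero.pos m) (Nat.one_lt_pow a.succ_ne_zero hq.one_lt)
  rw [card_eq_sum_card_fiberwise (t := s.image e) fun i hi => mem_image_of_mem e hi]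
  refine dvd_sum fun c _ => ih m hm (hω.pow (NeZero.pos _) rfl)
    (fun i hi => hη i (mem_filter.1 hi).1) (fun r hr hrm hrp => ?_) (hfiber c)
  exact (card_filter_le _ _).trans_lt <| hlarge r hr (dvd_mul_of_dvd_right hrm _) hrp

/-- If `n > 1` is `k`-large (least prime divisor `> k`, every other prime divisor
`> k!`) and `ζ_π` is an `n`-th root of unity for each `π ∈ S_k`, then
`Σ_{π ∈ S_k} ζ_π ≠ 0`. -/
theorem sum_roots_ne_zero_of_k_large {n k : ℕ} (hn : 1 < n)
    (hmin : k < n.minFac)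
    (hother : ∀ q : ℕ, q.Prime → q ∣ n → q ≠ n.minFac → Nat.factorial k < q)
    (ζ : Equiv.Perm (Fin k) → ℂ) (hζ : ∀ π, ζ π ^ n = 1) :
    (∑ π : Equiv.Perm (Fin k), ζ π) ≠ 0 := by
  intro hsum
  have : NeZero n := ⟨by omega⟩
  have hp : n.minFac.Prime := Nat.minFac_prime (by omega)
  have hcard : #(univ : Finset (Equiv.Perm (Fin k))) = k.factorial := by
    rw [card_univ, Fintype.card_perm, Fintype.card_fin]
  have hdvd := (Complex.isPrimitiveRoot_exp n (NeZero.ne n)).prime_dvd_card_of_sum_eq_zero hp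
    (fun π _ => hζ π) (by rwa [hcard]) hsum
  rw [hcard, hp.dvd_factorial] at hdvd
  omega
end

section
/- Let G be a finite abelian group, A = {a_1,...,a_k} and B = {b_1,...,b_k} two k-subsets of G, and K a field containing an element of multiplicative order |G|, with Ĝ = Hom(G, K^*). Suppose there is π ∈ S_k such that C = {a_1b_{π(1)},...,a_kb_{π(k)}} has k distinct elements and for every τ ∈ S_k with τ ≠ π the set {a_1b_{τ(1)},...,a_kb_{τ(k)}} differs from C. Then there exist χ_1,...,χ_k ∈ Ĝ such that det(χ_i(a_j))_{1≤i,j≤k} and det(χ_i(b_j))_{1≤i,j≤k} are both nonzero. -/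
/-!
The polynomial `det (X (a i * b j))` in the variables `X g`, `g ∈ G`, contains the monomial of
the transversal `i ↦ a i * b (π i)` with coefficient `± 1`: any other permutation contributing
the same monomial would produce the same set `C`. Being homogeneous of degree `k ≤ |G| ≤ |K|`,
it does not vanish at some `r : G → K`. As `|Ĝ| = |G|`, the characters span `G → K`, so
`r = ∑ χ, t χ • χ` and the matrix `(r (a i * b j))` factors as
`(χ (a i))ᵀ * diagonal t * (χ (b j))`. Cauchy–Binet applied to this invertible product
yields `k` characters for which both minors are nonzero.
-/

open Finset Matrix Cardinal

section CauchyBinet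

variable {R : Type*} [CommRing R] {m ι : Type*} [Fintype m] [DecidableEq m]

theorem Matrix.det_mul_eq_sum_prod_mul_det_submatrix [Fintype ι] (A : Matrix m ι R)
    (B : Matrix ι m R) :
    (A * B).det = ∑ s : m → ι, (∏ i, A i (s i)) * (B.submatrix s id).det := by
  have hrows : A * B = of fun i => ∑ j, A i j • B j := by
    ext i l
    simp [mul_apply, Finset.sum_apply]
  rw [hrows]
  calc detRowAlternating.toMultilinearMap (fun i => ∑ j, A i j • B j)
      = ∑ s : m → ι, detRowAlternating.toMultilinearMap (fun i => A i (s i) • B (s i)) :=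
        MultilinearMap.map_sum _ _
    _ = _ := by
        refine sum_congr rfl fun s _ => ?_
        rw [MultilinearMap.map_smul_univ, smul_eq_mul]
        rfl

theorem Matrix.sum_perm_prod_mul_det_submatrix (A : Matrix m ι R) (B : Matrix ι m R)
    (s : m → ι) :
    ∑ σ : Equiv.Perm m, (∏ i, A i (s (σ i))) * (B.submatrix (s ∘ σ) id).det =
      (A.submatrix id s).det * (B.submatrix s id).det := by
  have hperm (σ : Equiv.Perm m) : B.submatrix (s ∘ σ) id = (B.submatrix s id).submatrix σ id :=
    rfl
  simp_rw [hperm, det_permute, ← det_transpose (A.submatrix id s), det_apply', sum_mul]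
  refine sum_congr rfl fun σ _ => ?_
  simp only [transpose_apply, submatrix_apply, id_eq]
  ring

theorem Function.Injective.filter_image_eq_image_comp_perm [Fintype ι] [DecidableEq ι]
    {s₀ : m → ι} (hs₀ : Function.Injective s₀) :
    univ.filter (fun s : m → ι => univ.image s = univ.image s₀) =
      univ.image fun σ : Equiv.Perm m => s₀ ∘ σ := by
  ext s
  simp only [mem_filter, mem_univ, true_and, mem_image]
  constructor
  · intro hs
    have hmem (i : m) : s i ∈ univ.image s₀ := hs ▸ mem_image_of_mem s (mem_univ i)
    have hmem' (j : m) : s₀ j ∈ univ.image s := hs ▸ mem_image_of_mem s₀ (mem_univ j)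
    simp only [mem_image, mem_univ, true_and] at hmem hmem'
    choose σ hσ using hmem
    have hsurj : σ.Surjective := fun j => by
      obtain ⟨i, hi⟩ := hmem' j
      exact ⟨i, hs₀ ((hσ i).trans hi)⟩
    exact ⟨.ofBijective σ ⟨Finite.injective_iff_surjective.2 hsurj, hsurj⟩, funext hσ⟩
  · rintro ⟨σ, rfl⟩
    rw [← image_image, image_univ_equiv]

theorem Matrix.exists_det_submatrix_ne_zero_of_det_mul_ne_zero [Fintype ι] (A : Matrix m ι R)
    (B : Matrix ι m R) (h : (A * B).det ≠ 0) :
    ∃ s : m → ι, (A.submatrix id s).det ≠ 0 ∧ (B.submatrix s id).det ≠ 0 := by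
  classical
  by_contra! hAB
  refine h ?_
  -- Group the terms by the image of `s`: a fiber containing an injective `s₀` consists of
  -- the `s₀ ∘ σ` and sums to `det A_{s₀} * det B_{s₀}`; in the other fibers `B_s` has a
  -- repeated row.
  rw [det_mul_eq_sum_prod_mul_det_submatrix,
    ← sum_fiberwise (univ : Finset (m → ι)) fun s => univ.image s]
  refine sum_eq_zero fun S _ => ?_
  by_cases hS : ∃ s₀ : m → ι, univ.image s₀ = S ∧ Function.Injective s₀
  · obtain ⟨s₀, rfl, hs₀⟩ := hS
    rw [hs₀.filter_image_eq_image_comp_perm,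
      sum_image fun σ _ τ _ h => Equiv.ext (congrFun (hs₀.comp_left h))]
    refine (sum_perm_prod_mul_det_submatrix A B s₀).trans ?_
    rcases eq_or_ne (A.submatrix id s₀).det 0 with hA | hA
    · rw [hA, zero_mul]
    · rw [hAB s₀ hA, mul_zero]
  · refine sum_eq_zero fun s hs => ?_
    obtain ⟨i, j, hij, hne⟩ :=
      Function.not_injective_iff.1 fun hinj => hS ⟨s, (mem_filter.1 hs).2, hinj⟩
    rw [det_zero_of_row_eq hne (by ext; simp [hij]), mul_zero]

theorem Matrix.det_submatrix_diagonal_mul [Fintype ι] [DecidableEq ι] (t : ι → R)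
    (B : Matrix ι m R) (s : m → ι) :
    ((diagonal t * B).submatrix s id).det = (∏ i, t (s i)) * (B.submatrix s id).det := by
  rw [← det_mul_column]
  congr 1
  ext i j
  simp [diagonal_mul]

end CauchyBinet

theorem Finsupp.support_sum_single_one {α ι : Type*} [DecidableEq α] (s : Finset ι)
    (g : ι → α) :
    (∑ i ∈ s, single (g i) 1 : α →₀ ℕ).support = s.image g := by
  ext x
  simp [Finsupp.finsetSum_apply, single_apply]

namespace MvPolynomial

variable {R σ m : Type*} [CommRing R] [Fintype m] [DecidableEq m]

theorem det_of_X (f : m → m → σ) :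
    (of fun i j => (X (f i j) : MvPolynomial σ R)).det =
      ∑ τ : Equiv.Perm m,
        monomial (∑ i, Finsupp.single (f i (τ i)) 1) (Equiv.Perm.sign τ : R) := by
  rw [← det_transpose, det_apply]
  refine sum_congr rfl fun τ _ => ?_
  rw [← mul_one ((Equiv.Perm.sign τ : ℤ) : R), ← C_mul_monomial, monomial_sum_one]
  simp [X, Units.smul_def]

theorem isHomogeneous_det_of_X (f : m → m → σ) :
    (of fun i j => (X (f i j) : MvPolynomial σ R)).det.IsHomogeneous (Fintype.card m) := by
  rw [det_of_X]
  refine IsHomogeneous.sum _ _ _ fun τ _ => isHomogeneous_monomial _ ?_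
  simp [map_sum]

theorem coeff_det_of_X [DecidableEq σ] (f : m → m → σ) (π : Equiv.Perm m)
    (huniq : ∀ τ : Equiv.Perm m, τ ≠ π →
      univ.image (fun i => f i (τ i)) ≠ univ.image (fun i => f i (π i))) :
    coeff (∑ i, Finsupp.single (f i (π i)) 1)
      (of fun i j => (X (f i j) : MvPolynomial σ R)).det = Equiv.Perm.sign π := by
  rw [det_of_X, coeff_sum, sum_eq_single π]
  · rw [coeff_monomial, if_pos rfl]
  · intro τ _ hτ
    rw [coeff_monomial, if_neg]
    intro h
    exact huniq τ hτ (by simpa [Finsupp.support_sum_single_one] using congrArg Finsupp.support h)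
  · simp

theorem det_of_X_ne_zero [Nontrivial R] [DecidableEq σ] (f : m → m → σ) (π : Equiv.Perm m)
    (huniq : ∀ τ : Equiv.Perm m, τ ≠ π →
      univ.image (fun i => f i (τ i)) ≠ univ.image (fun i => f i (π i))) :
    (of fun i j => (X (f i j) : MvPolynomial σ R)).det ≠ 0 := by
  intro h
  have hcoeff := coeff_det_of_X (R := R) f π huniq
  rw [h, coeff_zero] at hcoeff
  rcases Int.units_eq_one_or (Equiv.Perm.sign π) with hs | hs <;> simp [hs] at hcoeff

end MvPolynomial

theorem exists_det_ne_zero_of_image_unique {R σ m : Type*} [CommRing R] [IsDomain R]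
    [Fintype m] [DecidableEq m] [DecidableEq σ] (f : m → m → σ) (π : Equiv.Perm m)
    (huniq : ∀ τ : Equiv.Perm m, τ ≠ π →
      univ.image (fun i => f i (τ i)) ≠ univ.image (fun i => f i (π i)))
    (hcard : (Fintype.card m : Cardinal) ≤ #R) :
    ∃ r : σ → R, (of fun i j => r (f i j)).det ≠ 0 := by
  by_contra! h
  refine MvPolynomial.det_of_X_ne_zero f π huniq
    ((MvPolynomial.isHomogeneous_det_of_X f).eq_zero_of_forall_eval_eq_zero_of_le_card
      (fun r => ?_) hcard)
  rw [RingHom.map_det]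
  convert h r
  ext
  simp

theorem natCast_orderOf_le_mk {M : Type*} [LeftCancelMonoid M] (x : M) :
    (orderOf x : Cardinal) ≤ #M := by
  by_cases hx : IsOfFinOrder x
  · have : Finite (Submonoid.powers x) := (finite_powers.2 hx).to_subtype
    rw [← Nat.card_submonoidPowers, Nat.cast_card]
    exact mk_le_of_injective Subtype.val_injective
  · simp [orderOf_eq_zero hx]

theorem hasEnoughRootsOfUnity_of_orderOf_eq {K : Type*} [Field K] {x : Kˣ} {n : ℕ} [NeZero n]
    (hx : orderOf x = n) :
    HasEnoughRootsOfUnity K n where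
  prim := ⟨x, IsPrimitiveRoot.coe_units_iff.2 (hx ▸ IsPrimitiveRoot.orderOf x)⟩
  cyc := rootsOfUnity.isCyclic K n

section Characters

variable (K : Type*) [Field K] {G : Type*} [CommGroup G] [Fintype G]
  [HasEnoughRootsOfUnity K (Monoid.exponent G)]

theorem span_range_coe_monoidHom_eq_top :
    Submodule.span K (Set.range fun (χ : G →* Kˣ) (g : G) => (χ g : K)) = ⊤ := by
  have := Fintype.ofFinite (G →* Kˣ)
  have hli : LinearIndependent K fun (χ : G →* Kˣ) (g : G) => (χ g : K) :=
    (linearIndependent_monoidHom G K).comp (fun χ => (Units.coeHom K).comp χ)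
      fun χ₁ χ₂ h => MonoidHom.ext fun g => Units.ext (DFunLike.congr_fun h g)
  refine hli.span_eq_top_of_card_eq_finrank' ?_
  rw [Module.finrank_fintype_fun_eq_card, ← Nat.card_eq_fintype_card,
    CommGroup.card_monoidHom_of_hasEnoughRootsOfUnity, Nat.card_eq_fintype_card]

def charMatrix {m : Type*} (a : m → G) : Matrix (G →* Kˣ) m K :=
  of fun χ j => (χ (a j) : K)

theorem exists_apply_mul_eq_charMatrix_transpose_mul_diagonal_mul [Fintype (G →* Kˣ)]
    [DecidableEq (G →* Kˣ)] {m : Type*} (r : G → K) (a b : m → G) :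
    ∃ t : (G →* Kˣ) → K, (of fun i j => r (a i * b j) : Matrix m m K) =
      (charMatrix K a)ᵀ * diagonal t * charMatrix K b := by
  obtain ⟨t, ht⟩ := (Submodule.mem_span_range_iff_exists_fun K).1
    ((span_range_coe_monoidHom_eq_top K (G := G)).symm ▸ Submodule.mem_top (x := r))
  refine ⟨t, ?_⟩
  ext i j
  rw [mul_apply]
  simp only [mul_diagonal, charMatrix, of_apply, transpose_apply, ← ht, Finset.sum_apply,
    Pi.smul_apply, smul_eq_mul, map_mul, Units.val_mul]
  exact sum_congr rfl fun χ _ => by ring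

end Characters

theorem unique_perm_implies_dets_ne_zero_general {G : Type*} [CommGroup G] [Fintype G]
    [DecidableEq G] {K : Type*} [Field K]
    (hK : ∃ x : Kˣ, orderOf x = Fintype.card G)
    {k : ℕ} (a b : Fin k → G) (ha : Function.Injective a)
    (π : Equiv.Perm (Fin k))
    (huniq : ∀ τ : Equiv.Perm (Fin k), τ ≠ π →
      Finset.image (fun i => a i * b (τ i)) Finset.univ ≠
        Finset.image (fun i => a i * b (π i)) Finset.univ) :
    ∃ χ : Fin k → (G →* Kˣ),
      Matrix.det (Matrix.of fun i j => (χ i (a j) : K)) ≠ 0 ∧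
      Matrix.det (Matrix.of fun i j => (χ i (b j) : K)) ≠ 0 := by
  classical
  obtain ⟨x, hx⟩ := hK
  have : NeZero (Fintype.card G) := ⟨Fintype.card_ne_zero⟩
  have : HasEnoughRootsOfUnity K (Fintype.card G) := hasEnoughRootsOfUnity_of_orderOf_eq hx
  have : HasEnoughRootsOfUnity K (Monoid.exponent G) := .of_dvd K Group.exponent_dvd_card
  have := Fintype.ofFinite (G →* Kˣ)
  have hkK : (Fintype.card (Fin k) : Cardinal) ≤ #K :=
    calc (Fintype.card (Fin k) : Cardinal) ≤ Fintype.card G := by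
          exact_mod_cast Fintype.card_le_of_injective a ha
      _ = orderOf x := by rw [hx]
      _ ≤ #Kˣ := natCast_orderOf_le_mk x
      _ ≤ #K := mk_le_of_injective Units.val_injective
  obtain ⟨r, hr⟩ := exists_det_ne_zero_of_image_unique (fun i j => a i * b j) π huniq hkK
  obtain ⟨t, ht⟩ := exists_apply_mul_eq_charMatrix_transpose_mul_diagonal_mul K r a b
  rw [ht, Matrix.mul_assoc] at hr
  obtain ⟨χ, hA, hB⟩ := exists_det_submatrix_ne_zero_of_det_mul_ne_zero _ _ hr
  refine ⟨χ, ?_, ?_⟩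
  · rwa [← transpose_submatrix, det_transpose] at hA
  · rw [det_submatrix_diagonal_mul] at hB
    exact right_ne_zero_of_mul hB

/-- Theorem 1.10(ii): if `π` is the unique permutation `τ` for which the set
`{a_1 b_{τ(1)}, ..., a_k b_{τ(k)}}` equals the `k`-set `C = {a_1 b_{π(1)}, ...}`,
then some characters `χ_1, ..., χ_k` make both `det (χ_i (a_j))` and
`det (χ_i (b_j))` nonzero. -/
theorem unique_perm_implies_dets_ne_zero {G : Type*} [CommGroup G] [Fintype G]
    [DecidableEq G] {K : Type*} [Field K]
    (hK : ∃ x : Kˣ, orderOf x = Fintype.card G)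
    {k : ℕ} (a b : Fin k → G) (ha : Function.Injective a) (hb : Function.Injective b)
    (π : Equiv.Perm (Fin k))
    (hπ : Function.Injective (fun i => a i * b (π i)))
    (huniq : ∀ τ : Equiv.Perm (Fin k), τ ≠ π →
      Finset.image (fun i => a i * b (τ i)) Finset.univ ≠
        Finset.image (fun i => a i * b (π i)) Finset.univ) :
    ∃ χ : Fin k → (G →* Kˣ),
      Matrix.det (Matrix.of fun i j => (χ i (a j) : K)) ≠ 0 ∧
      Matrix.det (Matrix.of fun i j => (χ i (b j) : K)) ≠ 0 :=
  unique_perm_implies_dets_ne_zero_general hK a b ha π huniq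
end

section
/- Let G be a finite cyclic group, K a field containing an element of multiplicative order |G|, and Ĝ = Hom(G, K^*). For any two k-subsets {a_1,...,a_k} and {b_1,...,b_k} of G, there exist characters χ_1,...,χ_k ∈ Ĝ such that det(χ_i(a_j))_{1≤i,j≤k} ≠ 0 and det(χ_i(b_j))_{1≤i,j≤k} ≠ 0. -/
/-! With `χ` an injective character, the choice `χ_i = χ ^ i` turns both matrices into
transposed Vandermonde matrices in the distinct values `χ (a j)`, resp. `χ (b j)`. -/

theorem IsCyclic.exists_monoidHom_injective_of_orderOf_eq {G M : Type*} [Group G] [IsCyclic G]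
    [Group M] (x : M) (hx : orderOf x = Nat.card G) : ∃ χ : G →* M, Function.Injective χ :=
  let e : G ≃* Subgroup.zpowers x :=
    mulEquivOfCyclicCardEq (by rw [Nat.card_zpowers, hx])
  ⟨(Subgroup.zpowers x).subtype.comp e.toMonoidHom,
    Subtype.val_injective.comp e.injective⟩

theorem Matrix.det_of_pow_apply_ne_zero {G R : Type*} [MulOneClass G] [CommRing R] [IsDomain R]
    (χ : G →* Rˣ) (hχ : Function.Injective χ) {k : ℕ} (a : Fin k → G)
    (ha : Function.Injective a) :
    (Matrix.of fun i j : Fin k => ((χ ^ (i : ℕ)) (a j) : R)).det ≠ 0 := by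
  have hvandermonde : (Matrix.of fun i j : Fin k => ((χ ^ (i : ℕ)) (a j) : R)) =
      (Matrix.vandermonde fun j => (χ (a j) : R)).transpose := by
    ext i j
    simp [Matrix.vandermonde_apply]
  rw [hvandermonde, Matrix.det_transpose, Matrix.det_vandermonde_ne_zero_iff]
  exact fun i j hij => ha (hχ (Units.ext hij))

/-- Conjecture 1.9 for cyclic groups: if `G` is finite cyclic and `K` contains an
element of multiplicative order `|G|`, then for any two `k`-subsets of `G` there are
characters `χ_1, ..., χ_k` making both determinants nonzero. -/
theorem chi_det_cyclic {G : Type*} [CommGroup G] [Fintype G] [IsCyclic G]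
    {K : Type*} [Field K] (hK : ∃ x : Kˣ, orderOf x = Fintype.card G)
    {k : ℕ} (a b : Fin k → G) (ha : Function.Injective a) (hb : Function.Injective b) :
    ∃ χ : Fin k → (G →* Kˣ),
      Matrix.det (Matrix.of fun i j => (χ i (a j) : K)) ≠ 0 ∧
      Matrix.det (Matrix.of fun i j => (χ i (b j) : K)) ≠ 0 := by
  obtain ⟨x, hx⟩ := hK
  obtain ⟨χ, hχ⟩ := IsCyclic.exists_monoidHom_injective_of_orderOf_eq (G := G) x
    (hx.trans Nat.card_eq_fintype_card.symm)
  exact ⟨fun i => χ ^ (i : ℕ), Matrix.det_of_pow_apply_ne_zero χ hχ a ha,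
    Matrix.det_of_pow_apply_ne_zero χ hχ b hb⟩
end

section
/- Assume that for every finite abelian group G of odd order, every pair of k-subsets {a_1,...,a_k}, {b_1,...,b_k} of G, and the field K = F_{2^{φ(|G|)}}, there exist characters χ_1,...,χ_k ∈ Hom(G, K^*) with det(χ_i(a_j)) ≠ 0 and det(χ_i(b_j)) ≠ 0. Then Snevily's conjecture holds: for every finite abelian group G of odd order and any two k-subsets {a_1,...,a_k}, {b_1,...,b_k} of G, there is π ∈ S_k with a_1b_{π(1)},...,a_kb_{π(k)} pairwise distinct. -/
/-!
Expand each permanent of `A ⊙ (B with columns permuted by π)` and sum over `π`: the inner sum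
over `π` is the permanent of `B`, so the total is `per A · per B`. Taking `A = (χᵢ(aⱼ))`,
`B = (χᵢ(bⱼ))` and using `det = per` in characteristic two, some `π` gives a character matrix
`(χᵢ(aⱼ b_{π j}))` with nonzero determinant, whose columns, hence the products `aⱼ b_{π j}`,
are then pairwise distinct.
-/

open Equiv Finset Matrix

namespace Matrix

variable {n : Type*} [DecidableEq n] [Fintype n]

theorem det_eq_permanent_of_charP_two {R : Type*} [CommRing R] [CharP R 2]
    (M : Matrix n n R) : M.det = M.permanent := by
  rw [det_apply, permanent]
  refine sum_congr rfl fun σ _ => ?_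
  rcases Int.units_eq_one_or (Perm.sign σ) with hs | hs <;>
    simp [hs, Units.smul_def, CharTwo.neg_eq]

theorem sum_permanent_hadamard_submatrix {R : Type*} [CommSemiring R]
    (A B : Matrix n n R) :
    ∑ π : Perm n, (A ⊙ B.submatrix id π).permanent = A.permanent * B.permanent := by
  have inner : ∀ σ : Perm n, ∑ π : Perm n, ∏ i, B (σ i) (π i) = B.permanent := fun σ => by
    rw [← permanent_permute_cols σ B, ← permanent_transpose]
    rfl
  simp only [permanent, hadamard_apply, submatrix_apply, id_eq, prod_mul_distrib]
  rw [sum_comm, sum_mul]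
  exact sum_congr rfl fun σ _ => by rw [← mul_sum]; exact congrArg _ (inner σ)

theorem injective_of_det_columns_ne_zero {α R : Type*} [CommRing R] (v : α → n → R) (g : n → α)
    (h : (of fun i j => v (g j) i).det ≠ 0) : Function.Injective g :=
  fun j j' hjj' => by_contra fun hne => h (det_zero_of_column_eq hne fun i => by simp [hjj'])

end Matrix

/-- Theorem 1.10(i): if Conjecture 1.9 holds over the field `𝔽_{2^{φ(|G|)}}` for every
finite abelian group `G` of odd order, then Snevily's conjecture holds. -/
theorem chi_det_implies_snevily
    (hyp : ∀ (G : Type) [CommGroup G] [Fintype G], Odd (Fintype.card G) →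
      ∀ (k : ℕ) (a b : Fin k → G), Function.Injective a → Function.Injective b →
        ∃ χ : Fin k → (G →* (GaloisField 2 (Nat.totient (Fintype.card G)))ˣ),
          Matrix.det (Matrix.of fun i j =>
            ((χ i (a j) : (GaloisField 2 (Nat.totient (Fintype.card G)))ˣ) :
              GaloisField 2 (Nat.totient (Fintype.card G)))) ≠ 0 ∧
          Matrix.det (Matrix.of fun i j =>
            ((χ i (b j) : (GaloisField 2 (Nat.totient (Fintype.card G)))ˣ) :
              GaloisField 2 (Nat.totient (Fintype.card G)))) ≠ 0) :
    ∀ (G : Type) [CommGroup G] [Fintype G], Odd (Fintype.card G) →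
      ∀ (k : ℕ) (a b : Fin k → G), Function.Injective a → Function.Injective b →
        ∃ π : Equiv.Perm (Fin k), Function.Injective (fun i => a i * b (π i)) := by
  intro G _ _ hodd k a b ha hb
  obtain ⟨χ, hA, hB⟩ := hyp G hodd k a b ha hb
  set K := GaloisField 2 (Nat.totient (Fintype.card G))
  set A : Matrix (Fin k) (Fin k) K := of fun i j => (χ i (a j) : K)
  set B : Matrix (Fin k) (Fin k) K := of fun i j => (χ i (b j) : K)
  have hsum : ∑ π : Perm (Fin k), (A ⊙ B.submatrix id π).permanent ≠ 0 := by
    rw [sum_permanent_hadamard_submatrix, ← det_eq_permanent_of_charP_two,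
      ← det_eq_permanent_of_charP_two]
    exact mul_ne_zero hA hB
  obtain ⟨π, -, hπ⟩ := exists_ne_zero_of_sum_ne_zero hsum
  have hAB : A ⊙ B.submatrix id π = of fun i j => (χ i (a j * b (π j)) : K) := by
    ext i j
    simp [A, B]
  rw [← det_eq_permanent_of_charP_two, hAB] at hπ
  exact ⟨π, injective_of_det_columns_ne_zero (fun x i => (χ i x : K)) _ hπ⟩
end
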